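/- arXiv:1303.7110 — 8 statements merged into one kernel-verified Lean document; each statement's English description precedes it below -/
import Mathlib

section
/- Let q be a prime power and α a primitive element (generator of the multiplicative group) of F_{q^5}, viewed as a 5-dimensional vector space over F_q. Then for any integer i with 1 ≤ i ≤ (q^5-1)/(q-1) - 1, the elements 1, α^i, α^{2i} are linearly independent over F_q. -/
theorem linearIndependent_one_pow_i_pow_two_i (q : ℕ) (F K : Type*) [Field F] [Fintype F]
    (hF : Fintype.card F = q) [Field K] [Algebra F K] (h5 : Module.finrank F K = 5)
    (α : Kˣ) (hα : orderOf α = q ^ 5 - 1)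
    (i : ℕ) (hi1 : 1 ≤ i) (hi2 : i ≤ q ^ 4 + q ^ 3 + q ^ 2 + q + 1 - 1) :
    LinearIndependent F ![(1 : K), (α : K) ^ i, (α : K) ^ (2 * i)] := by
  have hq : 2 ≤ q := hF ▸ Fintype.one_lt_card
  have hfin : Module.Finite F K :=
    Module.finite_of_finrank_pos (by rw [h5]; norm_num)
  set x : K := (α : K) ^ i with hx
  have hxne : x ≠ 0 := pow_ne_zero _ (Units.ne_zero α)
  have hint : IsIntegral F x := IsIntegral.of_finite F x
  have hdvd : (minpoly F x).natDegree ∣ 5 := h5 ▸ minpoly.degree_dvd hint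
  have hne1 : (minpoly F x).natDegree ≠ 1 := by
    intro h1
    obtain ⟨y, hy⟩ := minpoly.natDegree_eq_one_iff.mp h1
    have hyne : y ≠ 0 := fun h => hxne (by rw [← hy, h, map_zero])
    have hx1 : x ^ (q - 1) = 1 := by
      rw [← hy, ← map_pow, ← hF, FiniteField.pow_card_sub_one_eq_one y hyne, map_one]
    have hu : α ^ (i * (q - 1)) = 1 := by
      apply Units.ext
      rw [Units.val_pow_eq_pow_val, Units.val_one, pow_mul]
      exact hx1
    have hdvd' : q ^ 5 - 1 ∣ i * (q - 1) := hα ▸ orderOf_dvd_of_pow_eq_one hu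
    obtain ⟨p, rfl⟩ : ∃ p, q = p + 2 := ⟨q - 2, by omega⟩
    have key : (p + 2) ^ 5 - 1 ≤ i * (p + 2 - 1) :=
      Nat.le_of_dvd (Nat.mul_pos hi1 (by omega)) hdvd'
    have key' : (p + 2) ^ 5 ≤ i * (p + 1) + 1 := by
      have h1 : (1 : ℕ) ≤ (p + 2) ^ 5 := Nat.one_le_pow _ _ (by omega)
      have : p + 2 - 1 = p + 1 := rfl
      rw [this] at key
      omega
    have hi2' : i ≤ (p + 2) ^ 4 + (p + 2) ^ 3 + (p + 2) ^ 2 + (p + 2) := by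
      omega
    nlinarith [key', hi2', sq_nonneg p]
  have hdeg : (minpoly F x).natDegree = 5 := by
    rcases (Nat.prime_five).eq_one_or_self_of_dvd _ hdvd with h | h
    · exact absurd h hne1
    · exact h
  have li : LinearIndependent F fun j : Fin 5 => x ^ (j : ℕ) := by
    have := linearIndependent_pow (K := F) x
    rwa [hdeg] at this
  have li3 : LinearIndependent F fun j : Fin 3 => x ^ ((Fin.castLE (by norm_num) j : Fin 5) : ℕ) :=
    li.comp (Fin.castLE (by norm_num)) (Fin.castLE_injective _)
  convert li3 using 1
  funext j
  fin_cases j <;> simp [hx, ← pow_mul, mul_comm]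
end

section
/- Let q be a prime power, α a primitive element of F_{q^5}, and s = (q^5-1)/(q-1). Define an equivalence relation E_2 on the set of 2-dimensional F_q-subspaces of F_{q^5} by X ~ Y iff Y = α^j · X for some integer j. Then E_2 is an equivalence relation, and every equivalence class of E_2 has exactly s elements. -/
lemma aux_mem_range {F K : Type*} [Field F] [Field K] [Algebra F K]
    (h5 : Module.finrank F K = 5) (X : Submodule F K) (hX : Module.finrank F X = 2)
    (β : K) (hβ : ∀ x ∈ X, β * x ∈ X) : β ∈ (algebraMap F K).range := by
  haveI : FiniteDimensional F K := FiniteDimensional.of_finrank_pos (by omega)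
  have hint : IsIntegral F β := IsIntegral.of_finite F β
  set L := IntermediateField.adjoin F {β} with hL
  have hpow : ∀ n : ℕ, ∀ x ∈ X, β ^ n * x ∈ X := by
    intro n
    induction n with
    | zero => intro x hx; simpa using hx
    | succ n ih =>
      intro x hx
      have := hβ _ (ih x hx)
      rwa [← mul_assoc, ← pow_succ'] at this
  have hLX : ∀ y ∈ L, ∀ x ∈ X, y * x ∈ X := by
    intro y hy x hx
    have hy' : y ∈ Algebra.adjoin F ({β} : Set K) := by
      rw [← IntermediateField.adjoin_simple_toSubalgebra_of_isAlgebraic hint.isAlgebraic]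
      exact hy
    rw [Algebra.adjoin_singleton_eq_range_aeval] at hy'
    obtain ⟨p, hp⟩ := hy'
    have hp' : (Polynomial.aeval β) p = y := hp
    rw [← hp']
    clear hp hp' hy
    induction p using Polynomial.induction_on' with
    | add p q hp hq =>
      rw [map_add, add_mul]
      exact X.add_mem hp hq
    | monomial n a =>
      rw [Polynomial.aeval_monomial, mul_assoc, ← Algebra.smul_def]
      exact X.smul_mem a (hpow n x hx)
  obtain ⟨x, hxX, hx0⟩ : ∃ x ∈ X, x ≠ 0 := by
    haveI : Nontrivial X := Module.nontrivial_of_finrank_pos (R := F) (by rw [hX]; norm_num)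
    obtain ⟨x, hx⟩ := exists_ne (0 : X)
    exact ⟨x, x.2, fun h => hx (Subtype.ext h)⟩
  let f : L →ₗ[F] X :=
    { toFun := fun y => ⟨(y : K) * x, hLX y y.2 x hxX⟩
      map_add' := by intro a b; ext; simp [add_mul]
      map_smul' := by intro c a; ext; simp [Algebra.smul_def, mul_assoc] }
  have hfinj : Function.Injective f := by
    intro a b hab
    have : (a : K) * x = (b : K) * x := congrArg Subtype.val hab
    exact Subtype.ext (mul_right_cancel₀ hx0 this)
  have hle : Module.finrank F L ≤ 2 := hX ▸ LinearMap.finrank_le_finrank_of_injective hfinj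
  have hdvd : Module.finrank F L ∣ 5 := by
    have h := Module.finrank_mul_finrank F L K
    rw [h5] at h
    exact ⟨Module.finrank (↥L) K, h.symm⟩
  have h1 : Module.finrank F L = 1 := by
    rcases (by norm_num : Nat.Prime 5).eq_one_or_self_of_dvd _ hdvd with h | h
    · exact h
    · omega
  have hbot : L = ⊥ := IntermediateField.finrank_eq_one_iff.mp h1
  have : β ∈ L := IntermediateField.mem_adjoin_simple_self F β
  rw [hbot, IntermediateField.mem_bot] at this
  obtain ⟨c, hc⟩ := this
  exact ⟨c, hc⟩

open Pointwise

lemma aux_smul_map {F K : Type*} [Field F] [Field K] [Algebra F K] (u : Kˣ) (X : Submodule F K) :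
    u • X = X.map (LinearMap.mulLeft F (u : K)) := by
  show X.map (DistribMulAction.toLinearMap F K u) = _
  congr 1

lemma aux_finrank_smul {F K : Type*} [Field F] [Field K] [Algebra F K] (u : Kˣ)
    (X : Submodule F K) : Module.finrank F (u • X : Submodule F K) = Module.finrank F X := by
  have : (u • X : Submodule F K) = X.map (DistribMulAction.toLinearEquiv F K u : K →ₗ[F] K) := rfl
  rw [this, LinearEquiv.finrank_map_eq]

theorem E2_equivalence_and_class_size (q : ℕ) (F K : Type*) [Field F] [Fintype F]
    (hF : Fintype.card F = q) [Field K] [Algebra F K] (h5 : Module.finrank F K = 5)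
    (α : Kˣ) (hα : orderOf α = q ^ 5 - 1) :
    let R : {W : Submodule F K // Module.finrank F W = 2} →
        {W : Submodule F K // Module.finrank F W = 2} → Prop :=
      fun X Y => ∃ j : ℕ,
        (Y : Submodule F K) = (X : Submodule F K).map (LinearMap.mulLeft F ((α : K) ^ j))
    Equivalence R ∧
      ∀ X, Nat.card {Y // R X Y} = q ^ 4 + q ^ 3 + q ^ 2 + q + 1 := by
  intro R
  classical
  haveI : FiniteDimensional F K := FiniteDimensional.of_finrank_pos (by omega)
  haveI : Finite K := Module.finite_of_finite F
  haveI : Fintype K := Fintype.ofFinite K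
  have hq2 : 2 ≤ q := hF ▸ Fintype.one_lt_card
  have hcardK : Fintype.card K = q ^ 5 := by
    rw [Module.card_eq_pow_finrank (K := F) (V := K), hF, h5]
  have hcardKx : Nat.card Kˣ = q ^ 5 - 1 := by
    rw [Nat.card_eq_fintype_card, Fintype.card_units, hcardK]
  have hgen : ∀ u : Kˣ, ∃ j : ℕ, α ^ j = u := by
    intro u
    have hz : u ∈ Subgroup.zpowers α := by
      have hc : Nat.card (Subgroup.zpowers α) = Nat.card Kˣ := by
        rw [Nat.card_zpowers, hα, hcardKx]
      rw [Subgroup.eq_top_of_card_eq _ hc]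
      trivial
    exact mem_powers_iff_mem_zpowers.mpr hz
  have hR_iff : ∀ X Y : {W : Submodule F K // Module.finrank F W = 2},
      R X Y ↔ (Y : Submodule F K) ∈ MulAction.orbit Kˣ (X : Submodule F K) := by
    intro X Y
    rw [MulAction.mem_orbit_iff]
    constructor
    · rintro ⟨j, hj⟩
      refine ⟨α ^ j, ?_⟩
      rw [aux_smul_map, Units.val_pow_eq_pow_val]
      exact hj.symm
    · rintro ⟨u, hu⟩
      obtain ⟨j, hj⟩ := hgen u
      exact ⟨j, by rw [← Units.val_pow_eq_pow_val, hj, ← aux_smul_map, hu]⟩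
  constructor
  · constructor
    · intro X
      exact (hR_iff X X).mpr (MulAction.mem_orbit_self _)
    · intro X Y h
      obtain ⟨u, hu⟩ := MulAction.mem_orbit_iff.mp ((hR_iff X Y).mp h)
      refine (hR_iff Y X).mpr (MulAction.mem_orbit_iff.mpr ⟨u⁻¹, ?_⟩)
      rw [← hu, inv_smul_smul]
    · intro X Y Z h1 h2
      obtain ⟨u, hu⟩ := MulAction.mem_orbit_iff.mp ((hR_iff X Y).mp h1)
      obtain ⟨v, hv⟩ := MulAction.mem_orbit_iff.mp ((hR_iff Y Z).mp h2)
      refine (hR_iff X Z).mpr (MulAction.mem_orbit_iff.mpr ⟨v * u, ?_⟩)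
      rw [mul_smul, hu, hv]
  · intro X
    set X₀ := (X : Submodule F K) with hX₀
    have hdim : ∀ Z ∈ MulAction.orbit Kˣ X₀, Module.finrank F Z = 2 := by
      intro Z hZ
      obtain ⟨u, hu⟩ := MulAction.mem_orbit_iff.mp hZ
      rw [← hu, aux_finrank_smul]
      exact X.2
    have e : {Y // R X Y} ≃ MulAction.orbit Kˣ X₀ :=
      { toFun := fun Y => ⟨Y.1.1, (hR_iff X Y.1).mp Y.2⟩
        invFun := fun Z => ⟨⟨Z.1, hdim Z.1 Z.2⟩, (hR_iff X ⟨Z.1, hdim Z.1 Z.2⟩).mpr Z.2⟩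
        left_inv := fun Y => Subtype.ext (Subtype.ext rfl)
        right_inv := fun Z => Subtype.ext rfl }
    have horb : Nat.card (MulAction.orbit Kˣ X₀) * Nat.card (MulAction.stabilizer Kˣ X₀)
        = Nat.card Kˣ := by
      rw [← Nat.card_prod]
      exact Nat.card_congr (MulAction.orbitProdStabilizerEquivGroup Kˣ X₀)
    -- stabilizer has q - 1 elements
    have hmulmem : ∀ u : Kˣ, u ∈ MulAction.stabilizer Kˣ X₀ → ∀ x ∈ X₀, (u : K) * x ∈ X₀ := by
      intro u hu x hx
      have : X₀.map (LinearMap.mulLeft F (u : K)) = X₀ := by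
        rw [← aux_smul_map]; exact hu
      rw [← this]
      exact ⟨x, hx, rfl⟩
    have hstabF : ∀ a : F, a ≠ 0 → X₀.map (LinearMap.mulLeft F (algebraMap F K a)) = X₀ := by
      intro a ha
      apply le_antisymm
      · rintro _ ⟨y, hy, rfl⟩
        rw [LinearMap.mulLeft_apply, ← Algebra.smul_def]
        exact X₀.smul_mem a hy
      · intro x hx
        refine ⟨a⁻¹ • x, X₀.smul_mem _ hx, ?_⟩
        rw [LinearMap.mulLeft_apply, Algebra.smul_def, ← mul_assoc, ← map_mul,
          mul_inv_cancel₀ ha, map_one, one_mul]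
    let g : Fˣ → MulAction.stabilizer Kˣ X₀ := fun c =>
      ⟨Units.map (algebraMap F K : F →+* K).toMonoidHom c, by
        show (Units.map _ c : Kˣ) • X₀ = X₀
        rw [aux_smul_map]
        have hc : ((Units.map (algebraMap F K : F →+* K).toMonoidHom c : Kˣ) : K)
            = algebraMap F K (c : F) := rfl
        rw [hc]
        exact hstabF (c : F) c.ne_zero⟩
    have hginj : Function.Injective g := by
      intro a b hab
      have h1 : (algebraMap F K) (a : F) = (algebraMap F K) (b : F) :=
        congrArg (fun z : MulAction.stabilizer Kˣ X₀ => ((z : Kˣ) : K)) hab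
      exact Units.ext ((algebraMap F K).injective h1)
    have hgsurj : Function.Surjective g := by
      rintro ⟨u, hu⟩
      obtain ⟨c, hc⟩ := aux_mem_range h5 X₀ X.2 (u : K) (hmulmem u hu)
      have hc0 : c ≠ 0 := by
        rintro rfl
        rw [map_zero] at hc
        exact u.ne_zero hc.symm
      refine ⟨Units.mk0 c hc0, ?_⟩
      apply Subtype.ext
      apply Units.ext
      exact hc
    have hstab : Nat.card (MulAction.stabilizer Kˣ X₀) = q - 1 := by
      rw [← Nat.card_congr (Equiv.ofBijective g ⟨hginj, hgsurj⟩),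
        Nat.card_eq_fintype_card, Fintype.card_units, hF]
    rw [Nat.card_congr e]
    obtain ⟨m, rfl⟩ : ∃ m, q = m + 1 := ⟨q - 1, by omega⟩
    rw [hstab, hcardKx] at horb
    have hs : (m + 1) ^ 5 =
        ((m+1) ^ 4 + (m+1) ^ 3 + (m+1) ^ 2 + (m+1) + 1) * m + 1 := by ring
    have hsub : (m + 1) ^ 5 - 1 = ((m+1) ^ 4 + (m+1) ^ 3 + (m+1) ^ 2 + (m+1) + 1) * m := by
      rw [hs]; simp
    have hm1 : (m + 1) - 1 = m := by omega
    rw [hm1, hsub] at horb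
    have hm0 : 0 < m := by omega
    exact Nat.eq_of_mul_eq_mul_right hm0 horb
end

section
/- Let q be a prime power and r, n positive integers with r ≤ n. Let α be a primitive element of F_{q^n}, and for an r-dimensional F_q-subspace X of F_{q^n}, suppose j is the smallest positive integer with α^j · X = X. If gcd((q^r-1)/(q-1), (q^n-1)/(q-1)) = 1, then j = (q^n-1)/(q-1); i.e., the orbit of X under multiplication by α has exactly (q^n-1)/(q-1) distinct subspaces. -/
private lemma geom_nat (q m : ℕ) (hq : 1 ≤ q) :
    (∑ i ∈ Finset.range m, q ^ i) * (q - 1) = q ^ m - 1 := by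
  have h := geom_sum_mul (q : ℤ) m
  have h1 : 1 ≤ q ^ m := Nat.one_le_pow _ _ hq
  zify [hq, h1]
  push_cast at h ⊢
  linarith [h]

theorem orbit_size_of_subspace (q r n : ℕ) (F K : Type*) [Field F] [Fintype F]
    (hF : Fintype.card F = q) [Field K] [Algebra F K] (hn : Module.finrank F K = n)
    (hr : 0 < r) (hrn : r ≤ n) (α : Kˣ) (hα : orderOf α = q ^ n - 1)
    (X : Submodule F K) (hX : Module.finrank F X = r)
    (hgcd : Nat.gcd (∑ i ∈ Finset.range r, q ^ i) (∑ i ∈ Finset.range n, q ^ i) = 1)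
    (j : ℕ) (hj : 0 < j)
    (hfix : X.map (LinearMap.mulLeft F ((α : K) ^ j)) = X)
    (hmin : ∀ j' : ℕ, 0 < j' → X.map (LinearMap.mulLeft F ((α : K) ^ j')) = X → j ≤ j') :
    j = ∑ i ∈ Finset.range n, q ^ i := by
  classical
  have hq2 : 2 ≤ q := by rw [← hF]; exact Fintype.one_lt_card
  have hn0 : 0 < n := hr.trans_le hrn
  have hKfd : Module.Finite F K := Module.finite_of_finrank_pos (by rw [hn]; exact hn0)
  have hKfin : Finite K := Module.finite_of_finite F
  cases nonempty_fintype K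
  have hcardK : Fintype.card K = q ^ n := by rw [← hF, ← hn]; exact Module.card_eq_pow_finrank
  have hcardKu : Fintype.card Kˣ = q ^ n - 1 := by rw [Fintype.card_units, hcardK]
  set sn := ∑ i ∈ Finset.range n, q ^ i with hsn
  set sr := ∑ i ∈ Finset.range r, q ^ i with hsr
  have hgn : sn * (q - 1) = q ^ n - 1 := geom_nat q n (by omega)
  have hgr : sr * (q - 1) = q ^ r - 1 := geom_nat q r (by omega)
  have hsn0 : 0 < sn := by
    have : (1:ℕ) = q ^ 0 := rfl
    calc 0 < q ^ 0 := by norm_num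
    _ ≤ sn := Finset.single_le_sum (f := fun i => q ^ i) (fun i _ => Nat.zero_le _)
        (Finset.mem_range.mpr hn0)
  -- Step 1 : j ≤ sn since α ^ sn is an F-scalar
  have hstep1 : j ≤ sn := by
    have hα1 : (α ^ sn) ^ (q - 1) = 1 := by
      rw [← pow_mul, hgn, ← hα]; exact pow_orderOf_eq_one α
    set φ : Fˣ →* Kˣ := Units.map (algebraMap F K).toMonoidHom with hφ
    have hφinj : Function.Injective φ := by
      intro a b h
      ext
      exact (algebraMap F K).injective (congrArg Units.val h)
    have hsub : (Finset.univ.image φ : Finset Kˣ) ⊆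
        Finset.univ.filter (fun x : Kˣ => x ^ (q - 1) = 1) := by
      intro x hx
      obtain ⟨a, -, rfl⟩ := Finset.mem_image.mp hx
      simp only [Finset.mem_filter, Finset.mem_univ, true_and]
      rw [← map_pow]
      have ha1 : a ^ (q - 1) = 1 := by
        rw [← hF, ← Fintype.card_units]; exact pow_card_eq_one
      rw [ha1, map_one]
    have hcf : (Finset.univ.filter (fun x : Kˣ => x ^ (q - 1) = 1)).card ≤ q - 1 :=
      IsCyclic.card_pow_eq_one_le (by omega)
    have hci : (Finset.univ.image φ).card = q - 1 := by
      rw [Finset.card_image_of_injective _ hφinj, Finset.card_univ, Fintype.card_units, hF]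
    have heq : (Finset.univ.image φ : Finset Kˣ) =
        Finset.univ.filter (fun x : Kˣ => x ^ (q - 1) = 1) :=
      Finset.eq_of_subset_of_card_le hsub (by rw [hci]; exact hcf)
    have hmem : α ^ sn ∈ (Finset.univ.image φ : Finset Kˣ) := by
      rw [heq]; simp only [Finset.mem_filter, Finset.mem_univ, true_and]; exact hα1
    obtain ⟨a, -, ha⟩ := Finset.mem_image.mp hmem
    have hval : (α : K) ^ sn = algebraMap F K (a : F) := by
      have := congrArg Units.val ha
      simpa [hφ] using this.symm
    have hXfix : X.map (LinearMap.mulLeft F ((α : K) ^ sn)) = X := by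
      rw [hval]
      apply le_antisymm
      · rintro y hy
        obtain ⟨x, hx, rfl⟩ := Submodule.mem_map.mp hy
        simpa [LinearMap.mulLeft_apply, ← Algebra.smul_def] using X.smul_mem (a : F) hx
      · intro x hx
        refine Submodule.mem_map.mpr ⟨((a⁻¹ : Fˣ) : F) • x, X.smul_mem _ hx, ?_⟩
        rw [LinearMap.mulLeft_apply, Algebra.smul_def, ← mul_assoc, ← map_mul]
        simp
    exact hmin sn hsn0 hXfix
  -- Step 2 : sn ≤ j via product over nonzero elements of X
  have hstep2 : sn ≤ j := by
    set c : K := (α : K) ^ j with hc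
    have hc0 : c ≠ 0 := pow_ne_zero _ (Units.ne_zero α)
    have : Fintype X := Fintype.ofFinite _
    have hcardX : Fintype.card X = q ^ r := by rw [← hF, ← hX]; exact Module.card_eq_pow_finrank
    set A : Finset K := Finset.univ.filter (fun x : K => x ∈ X) with hA
    have hAcard : A.card = q ^ r := by
      rw [← hcardX]
      exact (Fintype.card_of_finset' A (by simp [hA])).symm
    set T : Finset K := A.erase 0 with hT
    have hTcard : T.card = q ^ r - 1 := by
      rw [hT, Finset.card_erase_of_mem, hAcard]
      simp [hA, X.zero_mem]
    have hmemT : ∀ x, x ∈ T ↔ x ∈ X ∧ x ≠ 0 := by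
      intro x
      simp [hT, hA, Finset.mem_erase, and_comm]
    have hmaps : ∀ x ∈ T, c * x ∈ T := by
      intro x hx
      obtain ⟨hx1, hx2⟩ := (hmemT x).mp hx
      refine (hmemT _).mpr ⟨?_, mul_ne_zero hc0 hx2⟩
      rw [← hfix]
      exact Submodule.mem_map.mpr ⟨x, hx1, rfl⟩
    have hinj : ∀ x ∈ T, ∀ y ∈ T, c * x = c * y → x = y :=
      fun x _ y _ h => mul_left_cancel₀ hc0 h
    have himg : T.image (fun x => c * x) = T :=
      Finset.eq_of_subset_of_card_le
        (fun y hy => by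
          obtain ⟨x, hx, rfl⟩ := Finset.mem_image.mp hy
          exact hmaps x hx)
        (le_of_eq (Finset.card_image_of_injOn hinj).symm)
    have hprod : c ^ T.card * ∏ x ∈ T, x = ∏ x ∈ T, x := by
      conv_rhs => rw [← himg]
      rw [Finset.prod_image hinj, Finset.prod_mul_distrib, Finset.prod_const]
    have hP0 : (∏ x ∈ T, x) ≠ 0 :=
      Finset.prod_ne_zero_iff.mpr (fun x hx => ((hmemT x).mp hx).2)
    have hc1 : c ^ (q ^ r - 1) = 1 := by
      rw [← hTcard]
      exact mul_right_cancel₀ hP0 (by rw [hprod, one_mul])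
    have hu1 : α ^ (j * (q ^ r - 1)) = 1 := by
      ext
      rw [pow_mul]
      push_cast
      rw [← hc]
      exact hc1
    have hdvd : q ^ n - 1 ∣ j * (q ^ r - 1) := by
      rw [← hα]; exact orderOf_dvd_of_pow_eq_one hu1
    have hdvdN : sn ∣ j * sr := by
      have h : sn * (q - 1) ∣ (j * sr) * (q - 1) := by
        rw [hgn, ← hgr] at *
        rw [mul_assoc]
        exact hdvd
      exact (Nat.mul_dvd_mul_iff_right (by omega : 0 < q - 1)).mp h
    have hcop : Nat.Coprime sn sr := Nat.Coprime.symm hgcd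
    have : sn ∣ j := hcop.dvd_of_dvd_mul_right hdvdN
    exact Nat.le_of_dvd hj this
  omega
end

section
/- Let q be a prime power and α a primitive element of F_{q^5}. If a 3-dimensional F_q-subspace Z of F_{q^5} contains two distinct 2-dimensional subspaces of the form span{α^t, α^{t+i}} and span{α^ℓ, α^{ℓ+i}} for the same i with 1 ≤ i ≤ s-1 (s = (q^5-1)/(q-1)), then Z = span{α^r, α^{r+i}, α^{r+2i}} for some integer r with 0 ≤ r ≤ s-1. -/
lemma mem_of_smul_mem' {F K : Type*} [Field F] [AddCommGroup K] [Module F K]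
    {c : F} (hc : c ≠ 0) {u : K} {p : Submodule F K} (h : c • u ∈ p) : u ∈ p := by
  have h2 := p.smul_mem c⁻¹ h
  rwa [smul_smul, inv_mul_cancel₀ hc, one_smul] at h2

lemma span_smul_pair_eq' {F K : Type*} [Field F] [AddCommGroup K] [Module F K]
    (c : F) (hc : c ≠ 0) (x y : K) :
    Submodule.span F {c • x, c • y} = Submodule.span F {x, y} := by
  apply le_antisymm <;> rw [Submodule.span_le] <;> rintro u hu <;>
    simp only [Set.mem_insert_iff, Set.mem_singleton_iff] at hu
  · rcases hu with rfl | rfl <;>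
      exact Submodule.smul_mem _ _ (Submodule.subset_span (by simp))
  · rcases hu with rfl | rfl <;>
      exact mem_of_smul_mem' hc (Submodule.subset_span (by simp))

lemma span_smul_triple_eq' {F K : Type*} [Field F] [AddCommGroup K] [Module F K]
    (c : F) (hc : c ≠ 0) (x y z : K) :
    Submodule.span F {c • x, c • y, c • z} = Submodule.span F {x, y, z} := by
  apply le_antisymm <;> rw [Submodule.span_le] <;> rintro u hu <;>
    simp only [Set.mem_insert_iff, Set.mem_singleton_iff] at hu
  · rcases hu with rfl | rfl | rfl <;>
      exact Submodule.smul_mem _ _ (Submodule.subset_span (by simp))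
  · rcases hu with rfl | rfl | rfl <;>
      exact mem_of_smul_mem' hc (Submodule.subset_span (by simp))

set_option maxHeartbeats 1000000 in
theorem three_dim_of_two_spans_same_diff (q : ℕ) (F K : Type*) [Field F] [Fintype F]
    (hF : Fintype.card F = q) [Field K] [Algebra F K] (h5 : Module.finrank F K = 5)
    (α : Kˣ) (hα : orderOf α = q ^ 5 - 1)
    (i : ℕ) (hi1 : 1 ≤ i) (hi2 : i ≤ q ^ 4 + q ^ 3 + q ^ 2 + q + 1 - 1)
    (Z : Submodule F K) (hZ : Module.finrank F Z = 3) (t ℓ : ℕ)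
    (ht2 : Module.finrank F (Submodule.span F {(α : K) ^ t, (α : K) ^ (t + i)}) = 2)
    (hl2 : Module.finrank F (Submodule.span F {(α : K) ^ ℓ, (α : K) ^ (ℓ + i)}) = 2)
    (hne : Submodule.span F {(α : K) ^ t, (α : K) ^ (t + i)} ≠
      Submodule.span F {(α : K) ^ ℓ, (α : K) ^ (ℓ + i)})
    (htZ : Submodule.span F {(α : K) ^ t, (α : K) ^ (t + i)} ≤ Z)
    (hlZ : Submodule.span F {(α : K) ^ ℓ, (α : K) ^ (ℓ + i)} ≤ Z) :
    ∃ r : ℕ, r ≤ q ^ 4 + q ^ 3 + q ^ 2 + q + 1 - 1 ∧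
      Z = Submodule.span F {(α : K) ^ r, (α : K) ^ (r + i), (α : K) ^ (r + 2 * i)} := by
  classical
  have hq2 : 2 ≤ q := by rw [← hF]; exact Fintype.one_lt_card
  set s : ℕ := q ^ 4 + q ^ 3 + q ^ 2 + q + 1 with hs
  have hs_pos : 0 < s := by positivity
  have hq5 : 32 ≤ q ^ 5 := by
    calc (32 : ℕ) = 2 ^ 5 := by norm_num
    _ ≤ q ^ 5 := Nat.pow_le_pow_left hq2 5
  have hqs : s * (q - 1) = q ^ 5 - 1 := by
    obtain ⟨k, rfl⟩ : ∃ k, q = k + 1 := ⟨q - 1, by omega⟩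
    have h : (k + 1) ^ 5 = ((k + 1) ^ 4 + (k + 1) ^ 3 + (k + 1) ^ 2 + (k + 1) + 1) * k + 1 := by
      ring
    simp only [hs, Nat.add_sub_cancel]
    omega
  haveI : FiniteDimensional F K := FiniteDimensional.of_finrank_pos (by rw [h5]; norm_num)
  haveI : Finite K := Module.finite_of_finite F
  haveI : Fintype K := Fintype.ofFinite K
  have hcardK : Fintype.card K = q ^ 5 := by
    rw [Module.card_eq_pow_finrank (K := F) (V := K), hF, h5]
  have hcardU : Fintype.card Kˣ = q ^ 5 - 1 := by rw [Fintype.card_units, hcardK]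
  -- every nonzero element is a natural power of α
  have hgen : ∀ x : K, x ≠ 0 → ∃ n : ℕ, x = (α : K) ^ n := by
    intro x hx
    have htop : Subgroup.zpowers α = ⊤ := by
      apply Subgroup.eq_top_of_card_eq
      rw [Nat.card_zpowers, hα, Nat.card_eq_fintype_card, hcardU]
    have hmem : Units.mk0 x hx ∈ Subgroup.zpowers α := by rw [htop]; trivial
    rw [← mem_powers_iff_mem_zpowers] at hmem
    obtain ⟨n, hn⟩ := hmem
    refine ⟨n, ?_⟩
    have := congrArg (Units.val) hn
    simpa using this.symm
  -- α ^ s is a scalar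
  have hαs : ∃ μ : F, μ ≠ 0 ∧ algebraMap F K μ = (α : K) ^ s := by
    by_contra hcon
    push_neg at hcon
    set P : Polynomial K := Polynomial.X ^ (q - 1) - Polynomial.C 1 with hP
    have hPne : P ≠ 0 := Polynomial.X_pow_sub_C_ne_zero (by omega) 1
    have hPdeg : P.natDegree = q - 1 := Polynomial.natDegree_X_pow_sub_C
    set T : Finset K := (Finset.univ.erase (0 : F)).image (algebraMap F K) with hT
    have hTcard : T.card = q - 1 := by
      rw [hT, Finset.card_image_of_injective _ (algebraMap F K).injective,
        Finset.card_erase_of_mem (Finset.mem_univ _), Finset.card_univ, hF]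
    have hroot : ∀ x ∈ insert ((α : K) ^ s) T, x ∈ P.roots := by
      intro x hx
      rw [Polynomial.mem_roots hPne]
      rcases Finset.mem_insert.mp hx with rfl | hx
      · have h1 : ((α : K) ^ s) ^ (q - 1) = 1 := by
          rw [← pow_mul, hqs]
          have h2 : (α ^ (q ^ 5 - 1) : Kˣ) = 1 := by rw [← hα]; exact pow_orderOf_eq_one α
          calc (α : K) ^ (q ^ 5 - 1) = ((α ^ (q ^ 5 - 1) : Kˣ) : K) := by
                rw [Units.val_pow_eq_pow_val]
          _ = 1 := by rw [h2]; rfl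
        simp [Polynomial.IsRoot, hP, h1]
      · obtain ⟨lam, hlam0, hlam⟩ := Finset.mem_image.mp hx
        have hne0 : lam ≠ 0 := Finset.ne_of_mem_erase hlam0
        have hpow : lam ^ (q - 1) = 1 := by
          rw [← hF]; exact FiniteField.pow_card_sub_one_eq_one lam hne0
        simp only [Polynomial.IsRoot, hP, Polynomial.eval_sub, Polynomial.eval_pow,
          Polynomial.eval_X, Polynomial.eval_C, Polynomial.eval_one, ← hlam, ← map_pow, hpow, map_one, sub_self]
    have hnotmem : ((α : K) ^ s) ∉ T := by
      intro hmem
      obtain ⟨lam, hlam0, hlam⟩ := Finset.mem_image.mp hmem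
      exact hcon lam (Finset.ne_of_mem_erase hlam0) hlam
    have hsub : insert ((α : K) ^ s) T ⊆ P.roots.toFinset := fun x hx =>
      Multiset.mem_toFinset.mpr (hroot x hx)
    have hcard1 : (insert ((α : K) ^ s) T).card = q := by
      rw [Finset.card_insert_of_notMem hnotmem, hTcard]; omega
    have hle : q ≤ q - 1 := by
      calc q = (insert ((α : K) ^ s) T).card := hcard1.symm
      _ ≤ P.roots.toFinset.card := Finset.card_le_card hsub
      _ ≤ Multiset.card P.roots := Multiset.toFinset_card_le _
      _ ≤ P.natDegree := P.card_roots'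
      _ = q - 1 := hPdeg
    omega
  -- dimension bookkeeping
  set Wt := Submodule.span F {(α : K) ^ t, (α : K) ^ (t + i)} with hWt
  set Wl := Submodule.span F {(α : K) ^ ℓ, (α : K) ^ (ℓ + i)} with hWl
  have hsum_inf := Submodule.finrank_sup_add_finrank_inf_eq Wt Wl
  rw [ht2, hl2] at hsum_inf
  have hsupZ : Wt ⊔ Wl ≤ Z := sup_le htZ hlZ
  have h3 : Module.finrank F ↥(Wt ⊔ Wl) ≤ 3 := by
    rw [← hZ]; exact Submodule.finrank_mono hsupZ
  have hinf1 : Module.finrank F ↥(Wt ⊓ Wl) ≤ 1 := by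
    by_contra h
    push_neg at h
    have h1 : Wt ⊓ Wl = Wt :=
      Submodule.eq_of_le_of_finrank_le inf_le_left (by rw [ht2]; omega)
    have h2 : Wt ⊓ Wl = Wl :=
      Submodule.eq_of_le_of_finrank_le inf_le_right (by rw [hl2]; omega)
    exact hne (h1.symm.trans h2)
  have hZeq : Wt ⊔ Wl = Z :=
    Submodule.eq_of_le_of_finrank_le hsupZ (by rw [hZ]; omega)
  have hinf_ne : Wt ⊓ Wl ≠ ⊥ := by
    intro h
    rw [h, finrank_bot] at hsum_inf
    omega
  obtain ⟨v, hv_mem, hv0⟩ := Submodule.exists_mem_ne_zero_of_ne_bot hinf_ne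
  obtain ⟨a, b, hab⟩ := Submodule.mem_span_pair.mp (Submodule.mem_inf.mp hv_mem).1
  obtain ⟨c, d, hcd⟩ := Submodule.mem_span_pair.mp (Submodule.mem_inf.mp hv_mem).2
  set γ : K := (α : K) ^ i with hγ
  set A : K := algebraMap F K a + algebraMap F K b * γ with hA
  set C : K := algebraMap F K c + algebraMap F K d * γ with hC
  have hvA : v = (α : K) ^ t * A := by
    rw [← hab, hA, hγ]
    simp only [Algebra.smul_def, pow_add]
    ring
  have hvC : v = (α : K) ^ ℓ * C := by
    rw [← hcd, hC, hγ]
    simp only [Algebra.smul_def, pow_add]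
    ring
  have hA0 : A ≠ 0 := fun h => hv0 (by rw [hvA, h, mul_zero])
  have hC0 : C ≠ 0 := fun h => hv0 (by rw [hvC, h, mul_zero])
  have hα0 : (α : K) ≠ 0 := Units.ne_zero α
  have hAC : (α : K) ^ t * A = (α : K) ^ ℓ * C := by rw [← hvA, ← hvC]
  by_cases hD : a * d - b * c = 0
  · -- degenerate case: contradiction with hne
    exfalso
    have had : a * d = b * c := sub_eq_zero.mp hD
    have had' : algebraMap F K a * algebraMap F K d = algebraMap F K b * algebraMap F K c := by
      rw [← map_mul, ← map_mul, had]
    have key : ∃ μ : F, μ ≠ 0 ∧ (α : K) ^ t = algebraMap F K μ * (α : K) ^ ℓ := by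
      have hab0 : a ≠ 0 ∨ b ≠ 0 := by
        by_contra h
        push_neg at h
        exact hA0 (by simp [hA, h.1, h.2])
      rcases hab0 with ha | hb
      · have h3 : (α : K) ^ t * algebraMap F K a = (α : K) ^ ℓ * algebraMap F K c := by
          apply mul_right_cancel₀ hA0
          have hrel : C * algebraMap F K a = A * algebraMap F K c := by
            rw [hA, hC]; linear_combination γ * had'
          linear_combination algebraMap F K a * hAC + (α : K) ^ ℓ * hrel
        have ha' : algebraMap F K a ≠ 0 := by
          simpa using (map_ne_zero_iff _ (algebraMap F K).injective).mpr ha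
        refine ⟨c * a⁻¹, ?_, ?_⟩
        · intro h
          have hc0 : c = 0 := by
            field_simp at h
            simpa using h
          rw [hc0, map_zero, mul_zero] at h3
          exact (pow_ne_zero t hα0) (by
            have := mul_eq_zero.mp h3
            tauto)
        · rw [map_mul, map_inv₀]
          field_simp
          linear_combination h3
      · have h3 : (α : K) ^ t * algebraMap F K b = (α : K) ^ ℓ * algebraMap F K d := by
          apply mul_right_cancel₀ hA0
          have hrel : C * algebraMap F K b = A * algebraMap F K d := by
            rw [hA, hC]; linear_combination -had'
          linear_combination algebraMap F K b * hAC + (α : K) ^ ℓ * hrel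
        have hb' : algebraMap F K b ≠ 0 := by
          simpa using (map_ne_zero_iff _ (algebraMap F K).injective).mpr hb
        refine ⟨d * b⁻¹, ?_, ?_⟩
        · intro h
          have hd0 : d = 0 := by
            field_simp at h
            simpa using h
          rw [hd0, map_zero, mul_zero] at h3
          exact (pow_ne_zero t hα0) (by
            have := mul_eq_zero.mp h3
            tauto)
        · rw [map_mul, map_inv₀]
          field_simp
          linear_combination h3
    obtain ⟨μ, hμ0, hμ⟩ := key
    apply hne
    have e1 : (α : K) ^ t = μ • (α : K) ^ ℓ := by rw [Algebra.smul_def, hμ]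
    have e2 : (α : K) ^ (t + i) = μ • (α : K) ^ (ℓ + i) := by
      rw [pow_add, pow_add, e1, Algebra.smul_def, Algebra.smul_def]
      ring
    rw [hWt, hWl, e1, e2]
    exact span_smul_pair_eq' μ hμ0 _ _
  · -- main case
    have hD' : algebraMap F K a * algebraMap F K d - algebraMap F K b * algebraMap F K c ≠ 0 := by
      rw [← map_mul, ← map_mul, ← map_sub]
      exact (map_ne_zero_iff _ (algebraMap F K).injective).mpr hD
    have m1 : (1 : K) ∈ Submodule.span F {C, C * γ, A, A * γ} := by
      have hid : (1 : K) = (d / (a * d - b * c)) • A + (-(b / (a * d - b * c))) • C := by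
        simp only [hA, hC, Algebra.smul_def, map_neg, map_div₀, map_sub, map_mul]
        field_simp
        have hD'' : algebraMap F K d * algebraMap F K a - algebraMap F K b * algebraMap F K c ≠ 0 := by
          rw [mul_comm]; exact hD'
        ring_nf
        rw [← sub_mul, mul_inv_cancel₀ hD'']
      rw [hid]
      exact Submodule.add_mem _
        (Submodule.smul_mem _ _ (Submodule.subset_span (by simp)))
        (Submodule.smul_mem _ _ (Submodule.subset_span (by simp)))
    have m2 : γ ∈ Submodule.span F {C, C * γ, A, A * γ} := by
      have hid : γ = (a / (a * d - b * c)) • C + (-(c / (a * d - b * c))) • A := by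
        simp only [hA, hC, Algebra.smul_def, map_neg, map_div₀, map_sub, map_mul]
        field_simp
        ring
      rw [hid]
      exact Submodule.add_mem _
        (Submodule.smul_mem _ _ (Submodule.subset_span (by simp)))
        (Submodule.smul_mem _ _ (Submodule.subset_span (by simp)))
    have m3 : γ * γ ∈ Submodule.span F {C, C * γ, A, A * γ} := by
      have hbd : b ≠ 0 ∨ d ≠ 0 := by
        by_contra h
        push_neg at h
        apply hD
        rw [h.1, h.2, mul_zero, zero_mul, sub_zero]
      rcases hbd with hb | hd
      · have hb' : algebraMap F K b ≠ 0 := by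
          simpa using (map_ne_zero_iff _ (algebraMap F K).injective).mpr hb
        have hid : γ * γ = b⁻¹ • (A * γ) + (-(a / b)) • γ := by
          simp only [hA, Algebra.smul_def, map_neg, map_div₀, map_inv₀]
          field_simp
          ring
        rw [hid]
        exact Submodule.add_mem _
          (Submodule.smul_mem _ _ (Submodule.subset_span (by simp)))
          (Submodule.smul_mem _ _ m2)
      · have hd' : algebraMap F K d ≠ 0 := by
          simpa using (map_ne_zero_iff _ (algebraMap F K).injective).mpr hd
        have hid : γ * γ = d⁻¹ • (C * γ) + (-(c / d)) • γ := by
          simp only [hC, Algebra.smul_def, map_neg, map_div₀, map_inv₀]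
          field_simp
          ring
        rw [hid]
        exact Submodule.add_mem _
          (Submodule.smul_mem _ _ (Submodule.subset_span (by simp)))
          (Submodule.smul_mem _ _ m2)
    have inner : Submodule.span F {C, C * γ, A, A * γ}
        = Submodule.span F {(1 : K), γ, γ * γ} := by
      apply le_antisymm
      · rw [Submodule.span_le]
        rintro x hx
        simp only [Set.mem_insert_iff, Set.mem_singleton_iff] at hx
        have w1 : (1 : K) ∈ Submodule.span F {(1 : K), γ, γ * γ} :=
          Submodule.subset_span (by simp)
        have w2 : γ ∈ Submodule.span F {(1 : K), γ, γ * γ} :=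
          Submodule.subset_span (by simp)
        have w3 : γ * γ ∈ Submodule.span F {(1 : K), γ, γ * γ} :=
          Submodule.subset_span (by simp)
        rcases hx with rfl | rfl | rfl | rfl
        · have hid : C = c • (1 : K) + d • γ := by
            simp only [hC, Algebra.smul_def]; ring
          rw [hid]
          exact Submodule.add_mem _ (Submodule.smul_mem _ _ w1) (Submodule.smul_mem _ _ w2)
        · have hid : C * γ = c • γ + d • (γ * γ) := by
            simp only [hC, Algebra.smul_def]; ring
          rw [hid]
          exact Submodule.add_mem _ (Submodule.smul_mem _ _ w2) (Submodule.smul_mem _ _ w3)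
        · have hid : A = a • (1 : K) + b • γ := by
            simp only [hA, Algebra.smul_def]; ring
          rw [hid]
          exact Submodule.add_mem _ (Submodule.smul_mem _ _ w1) (Submodule.smul_mem _ _ w2)
        · have hid : A * γ = a • γ + b • (γ * γ) := by
            simp only [hA, Algebra.smul_def]; ring
          rw [hid]
          exact Submodule.add_mem _ (Submodule.smul_mem _ _ w2) (Submodule.smul_mem _ _ w3)
      · rw [Submodule.span_le]
        rintro x hx
        simp only [Set.mem_insert_iff, Set.mem_singleton_iff] at hx
        rcases hx with rfl | rfl | rfl
        · exact m1
        · exact m2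
        · exact m3
    set w : K := v * A⁻¹ * C⁻¹ with hw
    have hw0 : w ≠ 0 := by
      rw [hw]
      exact mul_ne_zero (mul_ne_zero hv0 (inv_ne_zero hA0)) (inv_ne_zero hC0)
    have hwC : w * C = (α : K) ^ t := by
      rw [hw, hvA]
      field_simp
    have hwA : w * A = (α : K) ^ ℓ := by
      rw [hw, hvC]
      field_simp
    have himg := congrArg (Submodule.map (LinearMap.mulLeft F w)) inner
    rw [Submodule.map_span, Submodule.map_span] at himg
    have e1 : (LinearMap.mulLeft F w) '' {C, C * γ, A, A * γ}
        = {(α : K) ^ t, (α : K) ^ (t + i), (α : K) ^ ℓ, (α : K) ^ (ℓ + i)} := by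
      simp only [Set.image_insert_eq, Set.image_singleton, LinearMap.mulLeft_apply]
      rw [hwC, hwA,
        show w * (C * γ) = (α : K) ^ (t + i) by rw [← mul_assoc, hwC, hγ, ← pow_add],
        show w * (A * γ) = (α : K) ^ (ℓ + i) by rw [← mul_assoc, hwA, hγ, ← pow_add]]
    have e2 : (LinearMap.mulLeft F w) '' {(1 : K), γ, γ * γ} = {w, w * γ, w * (γ * γ)} := by
      simp only [Set.image_insert_eq, Set.image_singleton, LinearMap.mulLeft_apply, mul_one]
    rw [e1, e2] at himg
    have hZ4 : Submodule.span F
        ({(α : K) ^ t, (α : K) ^ (t + i), (α : K) ^ ℓ, (α : K) ^ (ℓ + i)} : Set K) = Z := by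
      rw [← hZeq, hWt, hWl, ← Submodule.span_union]
      congr 1
      ext x
      simp only [Set.mem_union, Set.mem_insert_iff, Set.mem_singleton_iff]
      tauto
    rw [hZ4] at himg
    obtain ⟨n, hn⟩ := hgen w hw0
    obtain ⟨μ, hμ0, hμ⟩ := hαs
    refine ⟨n % s, by have := Nat.mod_lt n hs_pos; omega, ?_⟩
    have hxn : (α : K) ^ n = (μ ^ (n / s)) • (α : K) ^ (n % s) := by
      rw [Algebra.smul_def, map_pow, hμ, ← pow_mul, ← pow_add]
      congr 1
      exact (Nat.div_add_mod n s).symm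
    have g1 : (α : K) ^ n * γ = (μ ^ (n / s)) • (α : K) ^ (n % s + i) := by
      rw [hxn, hγ, smul_mul_assoc, ← pow_add]
    have g2 : (α : K) ^ n * (γ * γ) = (μ ^ (n / s)) • (α : K) ^ (n % s + 2 * i) := by
      rw [hxn, hγ, smul_mul_assoc, ← pow_add, ← pow_add]
      have hexp : n % s + (i + i) = n % s + 2 * i := by omega
      rw [hexp]
    rw [himg, hn, g1, g2, hxn]
    exact span_smul_triple_eq' _ (pow_ne_zero _ hμ0) _ _ _
end

section
/- Let q be a prime power and α a primitive element of F_{q^5} with s = (q^5-1)/(q-1). Every 3-dimensional F_q-subspace Z of F_{q^5} can be written as Z = span{α^r, α^{r+i}, α^{r+2i}} for some integers r, i with 0 ≤ r ≤ s-1 and 1 ≤ i ≤ s-1. -/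
open Module Polynomial

/-- If `β` satisfies a quadratic relation over `F` inside a degree-5 extension and
`β ∉ F`, then all coefficients vanish. -/
lemma aux_quad_zero {F K : Type*} [Field F] [Field K] [Algebra F K]
    (h5 : Module.finrank F K = 5) (β : K) (hβ : β ∉ (algebraMap F K).range)
    (c₀ c₁ c₂ : F)
    (h : algebraMap F K c₀ + algebraMap F K c₁ * β + algebraMap F K c₂ * β ^ 2 = 0) :
    c₀ = 0 ∧ c₁ = 0 ∧ c₂ = 0 := by
  haveI : FiniteDimensional F K := FiniteDimensional.of_finrank_pos (by rw [h5]; norm_num)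
  have hint : IsIntegral F β := IsIntegral.of_finite F β
  by_cases h12 : c₁ = 0 ∧ c₂ = 0
  · obtain ⟨h1, h2⟩ := h12
    refine ⟨?_, h1, h2⟩
    have : algebraMap F K c₀ = 0 := by simpa [h1, h2] using h
    exact (algebraMap F K).injective (by simpa using this)
  · exfalso
    set p : F[X] := C c₂ * X ^ 2 + C c₁ * X + C c₀ with hp
    have hp0 : p ≠ 0 := by
      intro h0
      apply h12
      have e1 : p.coeff 1 = c₁ := by
        simp [hp, coeff_X, coeff_C, coeff_X_pow, coeff_C_mul]
      have e2 : p.coeff 2 = c₂ := by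
        simp [hp, coeff_X, coeff_C, coeff_X_pow, coeff_C_mul]
      rw [h0] at e1 e2
      simp only [Polynomial.coeff_zero] at e1 e2
      exact ⟨e1.symm, e2.symm⟩
    have haev : Polynomial.aeval β p = 0 := by
      simp only [hp, map_add, map_mul, map_pow, aeval_C, aeval_X]
      linear_combination h
    have hdvd : minpoly F β ∣ p := minpoly.dvd F β haev
    have hdeg : (minpoly F β).natDegree ≤ 2 := by
      refine le_trans (Polynomial.natDegree_le_of_dvd hdvd hp0) ?_
      rw [hp]
      compute_degree
    have h2le : 2 ≤ (minpoly F β).natDegree :=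
      (minpoly.two_le_natDegree_iff hint).2 hβ
    have hdd : (minpoly F β).natDegree ∣ 5 := h5 ▸ minpoly.degree_dvd hint
    rcases (Nat.dvd_prime (by norm_num)).1 hdd with h | h <;> omega

/-- Scaling a three-element set by a nonzero scalar of the base field does not
change its span. -/
lemma aux_span_scale {F K : Type*} [Field F] [Field K] [Algebra F K]
    (c : F) (hc : c ≠ 0) (x y z : K) :
    Submodule.span F {algebraMap F K c * x, algebraMap F K c * y, algebraMap F K c * z} =
      Submodule.span F {x, y, z} := by
  have fwd : ∀ u : K, u ∈ ({x, y, z} : Set K) →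
      algebraMap F K c * u ∈ Submodule.span F ({x, y, z} : Set K) := by
    intro u hu
    rw [← Algebra.smul_def]
    exact Submodule.smul_mem _ _ (Submodule.subset_span hu)
  have bwd : ∀ u : K, algebraMap F K c * u ∈
      Submodule.span F ({algebraMap F K c * x, algebraMap F K c * y, algebraMap F K c * z} : Set K) →
      u ∈ Submodule.span F ({algebraMap F K c * x, algebraMap F K c * y,
        algebraMap F K c * z} : Set K) := by
    intro u hu
    have huu : u = c⁻¹ • (algebraMap F K c * u) := by
      rw [Algebra.smul_def, ← mul_assoc, ← map_mul, inv_mul_cancel₀ hc, map_one, one_mul]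
    rw [huu]
    exact Submodule.smul_mem _ _ hu
  apply le_antisymm
  · rw [Submodule.span_le]
    rintro w hw
    simp only [Set.mem_insert_iff, Set.mem_singleton_iff] at hw
    rcases hw with h | h | h <;> rw [h]
    · exact fwd x (by simp)
    · exact fwd y (by simp)
    · exact fwd z (by simp)
  · rw [Submodule.span_le]
    rintro w hw
    simp only [Set.mem_insert_iff, Set.mem_singleton_iff] at hw
    rcases hw with h | h | h <;> rw [h]
    · exact bwd x (Submodule.subset_span (by simp))
    · exact bwd y (Submodule.subset_span (by simp))
    · exact bwd z (Submodule.subset_span (by simp))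

set_option maxHeartbeats 1000000 in
theorem three_dim_representation (q : ℕ) (F K : Type*) [Field F] [Fintype F]
    (hF : Fintype.card F = q) [Field K] [Algebra F K] (h5 : Module.finrank F K = 5)
    (α : Kˣ) (hα : orderOf α = q ^ 5 - 1)
    (Z : Submodule F K) (hZ : Module.finrank F Z = 3) :
    ∃ r i : ℕ, r ≤ q ^ 4 + q ^ 3 + q ^ 2 + q + 1 - 1 ∧ 1 ≤ i ∧
      i ≤ q ^ 4 + q ^ 3 + q ^ 2 + q + 1 - 1 ∧
      Z = Submodule.span F {(α : K) ^ r, (α : K) ^ (r + i), (α : K) ^ (r + 2 * i)} := by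
  classical
  set s : ℕ := q ^ 4 + q ^ 3 + q ^ 2 + q + 1 with hs
  haveI : FiniteDimensional F K := FiniteDimensional.of_finrank_pos (by rw [h5]; norm_num)
  haveI : Finite K := Module.finite_of_finite F
  haveI : Fintype K := Fintype.ofFinite K
  have hq2 : 2 ≤ q := hF ▸ Fintype.one_lt_card
  have hcardK : Fintype.card K = q ^ 5 := by
    rw [card_eq_pow_finrank (K := F) (V := K), hF, h5]
  have hq5 : q ^ 5 - 1 = s * (q - 1) := by
    obtain ⟨t, rfl⟩ : ∃ t, q = t + 1 := ⟨q - 1, by omega⟩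
    simp only [hs, Nat.add_sub_cancel]
    have : (t + 1) ^ 5 = ((t+1)^4 + (t+1)^3 + (t+1)^2 + (t+1) + 1) * t + 1 := by ring
    omega
  have hsne : s ≠ 0 := by positivity
  haveI : NeZero s := ⟨hsne⟩
  -- α generates Kˣ
  have hgen : ∀ u : Kˣ, ∃ n : ℕ, α ^ n = u := by
    have htop : Subgroup.zpowers α = ⊤ := by
      apply Subgroup.eq_top_of_card_eq
      rw [Nat.card_zpowers, hα, Nat.card_eq_fintype_card, Fintype.card_units, hcardK]
    intro u
    have : u ∈ Subgroup.zpowers α := htop ▸ Subgroup.mem_top u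
    rw [← mem_powers_iff_mem_zpowers] at this
    obtain ⟨n, hn⟩ := this
    exact ⟨n, hn⟩
  set e : Kˣ → ℕ := fun u => (hgen u).choose with he_def
  have he : ∀ u : Kˣ, α ^ (e u) = u := fun u => (hgen u).choose_spec
  have heK : ∀ u : Kˣ, (α : K) ^ (e u) = (u : K) := by
    intro u; rw [← Units.val_pow_eq_pow_val, he]
  have hαne : (α : K) ≠ 0 := Units.ne_zero α
  -- Every fixed point of x ↦ x^q lies in the image of F
  have hfix : ∀ x : K, x ^ q = x → ∃ c : F, algebraMap F K c = x := by
    intro x hx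
    set P : K[X] := X ^ q - X with hP
    have hP0 : P ≠ 0 := by
      intro h0
      have hco : P.coeff q = 1 := by
        rw [hP, Polynomial.coeff_sub, Polynomial.coeff_X_pow, if_pos rfl,
          Polynomial.coeff_X, if_neg (by omega : ¬ (1 = q))]
        ring
      rw [h0] at hco
      simp at hco
    have hA : (Finset.univ : Finset F).image (algebraMap F K) ⊆ P.roots.toFinset := by
      intro y hy
      simp only [Finset.mem_image] at hy
      obtain ⟨c, _, rfl⟩ := hy
      rw [Multiset.mem_toFinset, Polynomial.mem_roots hP0]
      simp only [hP, Polynomial.IsRoot, Polynomial.eval_sub, Polynomial.eval_pow,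
        Polynomial.eval_X, sub_eq_zero]
      rw [← map_pow, ← hF, FiniteField.pow_card]
    have hcard : P.roots.toFinset.card ≤ q := by
      refine le_trans (Multiset.toFinset_card_le _) (le_trans (Polynomial.card_roots' P) ?_)
      rw [hP]
      compute_degree
      omega
    have hAcard : ((Finset.univ : Finset F).image (algebraMap F K)).card = q := by
      rw [Finset.card_image_of_injective _ (algebraMap F K).injective, Finset.card_univ, hF]
    have heq : (Finset.univ : Finset F).image (algebraMap F K) = P.roots.toFinset :=
      Finset.eq_of_subset_of_card_le hA (by omega)
    have hxr : x ∈ P.roots.toFinset := by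
      rw [Multiset.mem_toFinset, Polynomial.mem_roots hP0]
      simp [hP, Polynomial.IsRoot, hx]
    rw [← heq, Finset.mem_image] at hxr
    obtain ⟨c, _, hc⟩ := hxr
    exact ⟨c, hc⟩
  -- α^s lies in the image of F
  have hord : (α : K) ^ (q ^ 5 - 1) = 1 := by
    rw [← Units.val_pow_eq_pow_val, ← hα, pow_orderOf_eq_one, Units.val_one]
  obtain ⟨c0, hc0⟩ : ∃ c : F, algebraMap F K c = (α : K) ^ s := by
    apply hfix
    rw [← pow_mul]
    have h1 : s * q = (q ^ 5 - 1) + s := by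
      have h2 : s * q = s * (q - 1) + s * 1 := by
        rw [← Nat.mul_add]
        congr 1
        omega
      rw [h2, ← hq5, Nat.mul_one]
    rw [h1, pow_add, hord, one_mul]
  have hc0ne : c0 ≠ 0 := by
    intro h0
    rw [h0, map_zero] at hc0
    exact pow_ne_zero s hαne hc0.symm
  -- if α^m ∈ F then s ∣ m
  have hcore : ∀ m : ℕ, (∃ c : F, algebraMap F K c = (α : K) ^ m) → (m : ZMod s) = 0 := by
    intro m ⟨c, hc⟩
    have hcne : c ≠ 0 := by
      intro h0; rw [h0, map_zero] at hc; exact pow_ne_zero m hαne hc.symm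
    have h1 : (α : K) ^ (m * (q - 1)) = 1 := by
      rw [pow_mul, ← hc, ← map_pow]
      have : c ^ (q - 1) = 1 := by
        rw [← hF]; exact FiniteField.pow_card_sub_one_eq_one c hcne
      rw [this, map_one]
    have h2 : α ^ (m * (q - 1)) = 1 := Units.ext (by simpa using h1)
    have h3 : (q ^ 5 - 1) ∣ m * (q - 1) := hα ▸ orderOf_dvd_of_pow_eq_one h2
    rw [hq5] at h3
    have h4 : s ∣ m := by
      rcases Nat.eq_zero_or_pos (q - 1) with h | h
      · omega
      · exact (Nat.mul_dvd_mul_iff_right h).1 h3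
    exact (ZMod.natCast_eq_zero_iff m s).2 h4
  -- main congruence ↔ scalar lemma
  have hscal : ∀ m k : ℕ, ((m : ZMod s) = (k : ZMod s)) ↔
      ∃ c : F, c ≠ 0 ∧ (α : K) ^ m = algebraMap F K c * (α : K) ^ k := by
    intro m k
    constructor
    · intro hmk
      have hmod : m % s = k % s := by
        have := (ZMod.natCast_eq_natCast_iff m k s).1 hmk
        exact this
      have hm : (α : K) ^ m = algebraMap F K (c0 ^ (m / s)) * (α : K) ^ (m % s) := by
        conv_lhs => rw [← Nat.div_add_mod m s]
        rw [pow_add, pow_mul, ← hc0, ← map_pow]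
      have hk : (α : K) ^ k = algebraMap F K (c0 ^ (k / s)) * (α : K) ^ (k % s) := by
        conv_lhs => rw [← Nat.div_add_mod k s]
        rw [pow_add, pow_mul, ← hc0, ← map_pow]
      refine ⟨c0 ^ (m / s) / c0 ^ (k / s),
        div_ne_zero (pow_ne_zero _ hc0ne) (pow_ne_zero _ hc0ne), ?_⟩
      have hne : algebraMap F K (c0 ^ (k / s)) ≠ 0 := by
        rw [Ne, _root_.map_eq_zero]
        exact pow_ne_zero _ hc0ne
      rw [_root_.map_div₀, hm, hk, hmod, ← mul_assoc, div_mul_cancel₀ _ hne]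
    · rintro ⟨c, hc, hmk⟩
      set T : ℕ := (q ^ 5 - 1) * (k + 1) with hT
      have hq5pos : 1 ≤ q ^ 5 - 1 := by
        have : 2 ^ 5 ≤ q ^ 5 := Nat.pow_le_pow_left hq2 5
        omega
      have hkT : k ≤ T := by
        calc k ≤ 1 * (k + 1) := by omega
        _ ≤ T := Nat.mul_le_mul_right _ hq5pos
      have hT1 : (α : K) ^ T = 1 := by rw [hT, pow_mul, hord, one_pow]
      have key : (α : K) ^ (m + (T - k)) = algebraMap F K c := by
        rw [pow_add, hmk, mul_assoc, ← pow_add]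
        have : k + (T - k) = T := by omega
        rw [this, hT1, mul_one]
      have h0 : ((m + (T - k) : ℕ) : ZMod s) = 0 := hcore _ ⟨c, key.symm⟩
      have hsT : (T : ZMod s) = 0 := by
        rw [(ZMod.natCast_eq_zero_iff T s)]
        exact Dvd.dvd.mul_right (hq5 ▸ Dvd.intro _ rfl) _
      push_cast [hkT] at h0
      linear_combination h0 - hsT
  -- the finset of nonzero elements of Z
  set Zfin : Finset K := Finset.univ.filter (· ∈ Z) with hZfin
  have hZfincard : Zfin.card = q ^ 3 := by
    rw [hZfin, ← Fintype.card_subtype]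
    rw [show Fintype.card {x // x ∈ Z} = Fintype.card Z from Fintype.card_congr (Equiv.refl _)]
    rw [card_eq_pow_finrank (K := F) (V := Z), hF, hZ]
  set Zne : Finset K := Zfin.erase 0 with hZne
  have hZnecard : Zne.card = q ^ 3 - 1 := by
    rw [hZne, Finset.card_erase_of_mem, hZfincard]
    simp [hZfin, Submodule.zero_mem]
  -- residue map
  set φ : K → ZMod s := fun z => if h : z = 0 then 0 else ((e (Units.mk0 z h) : ℕ) : ZMod s)
    with hφdef
  have hφ : ∀ (z : K) (hz : z ≠ 0), φ z = ((e (Units.mk0 z hz) : ℕ) : ZMod s) := by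
    intro z hz; simp [hφdef, hz]
  -- relation between φ and scalars
  have hφscal : ∀ (z w : K) (hz : z ≠ 0) (hw : w ≠ 0),
      (φ z = φ w ↔ ∃ c : F, c ≠ 0 ∧ z = algebraMap F K c * w) := by
    intro z w hz hw
    rw [hφ z hz, hφ w hw, hscal]
    rw [heK (Units.mk0 z hz), heK (Units.mk0 w hw)]
    simp
  set S : Finset (ZMod s) := Zne.image φ with hS
  -- lower bound on S.card
  have hfiber : ∀ b ∈ S, (Zne.filter (fun z => φ z = b)).card ≤ q - 1 := by
    intro b hb
    rcases Finset.eq_empty_or_nonempty (Zne.filter (fun z => φ z = b)) with h | ⟨z0, hz0⟩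
    · rw [h]; simp
    · have hz0' := Finset.mem_filter.1 hz0
      have hz0ne : z0 ≠ 0 := Finset.ne_of_mem_erase hz0'.1
      have hgetc : ∀ z ∈ Zne.filter (fun z => φ z = b),
          ∃ c : F, c ≠ 0 ∧ z = algebraMap F K c * z0 := by
        intro z hzm
        have hzm' := Finset.mem_filter.1 hzm
        have hzne : z ≠ 0 := Finset.ne_of_mem_erase hzm'.1
        exact (hφscal z z0 hzne hz0ne).1 (hzm'.2.trans hz0'.2.symm)
      set ψ : K → F := fun z =>
        if h : ∃ c : F, c ≠ 0 ∧ z = algebraMap F K c * z0 then h.choose else 0 with hψ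
      have hcard : (Finset.univ.erase (0 : F)).card = q - 1 := by
        rw [Finset.card_erase_of_mem (Finset.mem_univ _), Finset.card_univ, hF]
      rw [← hcard]
      apply Finset.card_le_card_of_injOn ψ
      · intro z hzm
        obtain ⟨c, hc, hzc⟩ := hgetc z hzm
        have hex : ∃ c : F, c ≠ 0 ∧ z = algebraMap F K c * z0 := ⟨c, hc, hzc⟩
        simp only [hψ, dif_pos hex]
        exact Finset.mem_erase.2 ⟨hex.choose_spec.1, Finset.mem_univ _⟩
      · intro z hzm w hwm hzw
        obtain ⟨c, hc, hzc⟩ := hgetc z (by simpa using hzm)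
        obtain ⟨c', hc', hwc⟩ := hgetc w (by simpa using hwm)
        have hexz : ∃ c : F, c ≠ 0 ∧ z = algebraMap F K c * z0 := ⟨c, hc, hzc⟩
        have hexw : ∃ c : F, c ≠ 0 ∧ w = algebraMap F K c * z0 := ⟨c', hc', hwc⟩
        simp only [hψ, dif_pos hexz, dif_pos hexw] at hzw
        rw [hexz.choose_spec.2, hexw.choose_spec.2, hzw]
  have hScard : q ^ 2 + q + 1 ≤ S.card := by
    have h1 : Zne.card ≤ (q - 1) * S.card := Finset.card_le_mul_card_image Zne (q - 1) hfiber
    rw [hZnecard] at h1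
    by_contra hlt
    push_neg at hlt
    have h2 : (q - 1) * S.card ≤ (q - 1) * (q ^ 2 + q) :=
      Nat.mul_le_mul_left _ (by omega)
    have h3 : (q - 1) * (q ^ 2 + q) = q ^ 3 - q := by
      obtain ⟨t, rfl⟩ : ∃ t, q = t + 1 := ⟨q - 1, by omega⟩
      simp only [Nat.add_sub_cancel]
      have : (t + 1) ^ 3 = t * ((t+1)^2 + (t+1)) + (t + 1) := by ring
      omega
    have hq3 : 8 ≤ q ^ 3 := by
      calc (8:ℕ) = 2 ^ 3 := by norm_num
      _ ≤ q ^ 3 := Nat.pow_le_pow_left hq2 3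
    omega
  -- pigeonhole on differences
  have hpig : ∃ p ∈ S.offDiag, ∃ p' ∈ S.offDiag, p ≠ p' ∧ p.2 - p.1 = p'.2 - p'.1 := by
    have hmaps : ∀ p ∈ S.offDiag, p.2 - p.1 ∈ Finset.univ.erase (0 : ZMod s) := by
      intro p hp
      obtain ⟨_, _, hne⟩ := Finset.mem_offDiag.1 hp
      exact Finset.mem_erase.2 ⟨sub_ne_zero.2 (Ne.symm hne), Finset.mem_univ _⟩
    have hclt : (Finset.univ.erase (0 : ZMod s)).card < S.offDiag.card := by
      rw [Finset.card_erase_of_mem (Finset.mem_univ _), Finset.card_univ, ZMod.card,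
        Finset.offDiag_card]
      have h1 : S.card * S.card - S.card = S.card * (S.card - 1) := by
        rw [Nat.mul_sub, Nat.mul_one]
      rw [h1]
      have h2 : (q^2+q+1) * (q^2+q) ≤ S.card * (S.card - 1) :=
        Nat.mul_le_mul hScard (by omega)
      have h3 : (q^2+q+1) * (q^2+q) = q^4+2*q^3+2*q^2+q := by ring
      have hq3 : 8 ≤ q ^ 3 := by
        calc (8:ℕ) = 2 ^ 3 := by norm_num
        _ ≤ q ^ 3 := Nat.pow_le_pow_left hq2 3
      have hq2' : 4 ≤ q ^ 2 := by
        calc (4:ℕ) = 2 ^ 2 := by norm_num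
        _ ≤ q ^ 2 := Nat.pow_le_pow_left hq2 2
      omega
    obtain ⟨p, hp, p', hp', hne, heq⟩ :=
      Finset.exists_ne_map_eq_of_card_lt_of_maps_to hclt hmaps
    exact ⟨p, hp, p', hp', hne, heq⟩
  obtain ⟨p, hp, p', hp', hpne, hpd⟩ := hpig
  obtain ⟨ha, hb, hab⟩ := Finset.mem_offDiag.1 hp
  obtain ⟨ha', hb', hab'⟩ := Finset.mem_offDiag.1 hp'
  set d : ZMod s := p.2 - p.1 with hd
  have hd0 : d ≠ 0 := sub_ne_zero.2 (Ne.symm hab)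
  have haa' : p.1 ≠ p'.1 := by
    intro h
    apply hpne
    have hh : p.2 - p.1 = p'.2 - p'.1 := by rw [← hd, hpd]
    rw [h] at hh
    exact Prod.ext h (sub_left_inj.1 hh)
  -- extract elements
  have hget : ∀ a ∈ S, ∃ z : K, z ≠ 0 ∧ z ∈ Z ∧ φ z = a := by
    intro a haS
    obtain ⟨z, hz, hza⟩ := Finset.mem_image.1 haS
    have hzZ := Finset.mem_of_mem_erase hz
    exact ⟨z, Finset.ne_of_mem_erase hz, (Finset.mem_filter.1 hzZ).2, hza⟩
  obtain ⟨z1, hz1ne, hz1Z, hz1φ⟩ := hget _ ha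
  obtain ⟨z2, hz2ne, hz2Z, hz2φ⟩ := hget _ hb
  obtain ⟨z3, hz3ne, hz3Z, hz3φ⟩ := hget _ ha'
  obtain ⟨z4, hz4ne, hz4Z, hz4φ⟩ := hget _ hb'
  set u1 : Kˣ := Units.mk0 z1 hz1ne
  set u2 : Kˣ := Units.mk0 z2 hz2ne
  set u3 : Kˣ := Units.mk0 z3 hz3ne
  set u4 : Kˣ := Units.mk0 z4 hz4ne
  set n : ℕ := d.val with hn
  have hn1 : 1 ≤ n := by
    rcases Nat.eq_zero_or_pos n with h | h
    · exact absurd ((ZMod.val_eq_zero d).1 h) hd0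
    · omega
  have hns : n < s := ZMod.val_lt d
  have hncast : ((n : ℕ) : ZMod s) = d := by
    rw [hn, ZMod.natCast_val, ZMod.cast_id]
  set bK : K := (α : K) ^ n with hbK
  have hbKne : bK ≠ 0 := pow_ne_zero n hαne
  -- membership lemma: for units u v with (e v) ≡ (e u) + n mod s and v ∈ Z, bK * u ∈ Z
  have hmem : ∀ (zu zv : K) (hu : zu ≠ 0) (hv : zv ≠ 0), zv ∈ Z →
      ((n : ZMod s) + φ zu = φ zv) → bK * zu ∈ Z := by
    intro zu zv hu hv hvZ hcong
    have h1 : ((n + e (Units.mk0 zu hu) : ℕ) : ZMod s) = ((e (Units.mk0 zv hv) : ℕ) : ZMod s) := by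
      push_cast
      rw [hφ zu hu, hφ zv hv] at hcong
      exact hcong
    obtain ⟨c, hc, hcc⟩ := (hscal _ _).1 h1
    have h2 : (α : K) ^ (n + e (Units.mk0 zu hu)) = bK * zu := by
      rw [pow_add, hbK, heK]
      simp
    have h3 : (α : K) ^ (e (Units.mk0 zv hv)) = zv := by rw [heK]; simp
    rw [h2, h3] at hcc
    rw [hcc, ← Algebra.smul_def]
    exact Submodule.smul_mem Z c hvZ
  -- the subspaces
  set L1 : K →ₗ[F] K := LinearMap.mulLeft F bK with hL1
  set L2 : K →ₗ[F] K := LinearMap.mulLeft F (bK * bK) with hL2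
  set Z1 : Submodule F K := Z.comap L1 with hZ1
  set Z2 : Submodule F K := Z.comap L2 with hZ2
  -- linear equivalence by multiplication by bK
  set eβ : K ≃ₗ[F] K := LinearEquiv.ofLinear L1 (LinearMap.mulLeft F bK⁻¹)
    (by ext x; simp [hL1, LinearMap.mulLeft_apply, mul_assoc,
          inv_mul_cancel₀ hbKne, mul_inv_cancel_left₀ hbKne])
    (by ext x; simp [hL1, LinearMap.mulLeft_apply, mul_assoc,
          inv_mul_cancel_left₀ hbKne]) with heβ
  have heβlin : (eβ : K →ₗ[F] K) = L1 := rfl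
  have hZ1rank : finrank F Z1 = 3 := by
    have := LinearEquiv.finrank_eq (LinearEquiv.ofSubmodule' eβ Z)
    rw [heβlin] at this
    rw [hZ1, this, hZ]
  -- memberships in Z1
  have hu1Z1 : z1 ∈ Z1 := by
    rw [hZ1, Submodule.mem_comap, hL1, LinearMap.mulLeft_apply]
    apply hmem z1 z2 hz1ne hz2ne hz2Z
    rw [hz1φ, hz2φ, hncast, hd]
    ring
  have hu3Z1 : z3 ∈ Z1 := by
    rw [hZ1, Submodule.mem_comap, hL1, LinearMap.mulLeft_apply]
    apply hmem z3 z4 hz3ne hz4ne hz4Z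
    rw [hz3φ, hz4φ, hncast, hpd]
    ring
  -- W1 := Z ⊓ Z1 has rank ≥ 2
  set W1 : Submodule F K := Z ⊓ Z1 with hW1
  have hz1W1 : z1 ∈ W1 := Submodule.mem_inf.2 ⟨hz1Z, hu1Z1⟩
  have hz3W1 : z3 ∈ W1 := Submodule.mem_inf.2 ⟨hz3Z, hu3Z1⟩
  have hW1rank : 2 ≤ finrank F W1 := by
    by_contra hlt
    push_neg at hlt
    have hsp : Submodule.span F {z1} ≤ W1 := by
      rw [Submodule.span_le, Set.singleton_subset_iff]; exact hz1W1
    have hspr : finrank F (Submodule.span F {z1}) = 1 := finrank_span_singleton hz1ne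
    have heq : Submodule.span F {z1} = W1 :=
      Submodule.eq_of_le_of_finrank_le hsp (by omega)
    have : z3 ∈ Submodule.span F {z1} := heq ▸ hz3W1
    obtain ⟨c, hc⟩ := Submodule.mem_span_singleton.1 this
    have hcne : c ≠ 0 := by
      intro h0; rw [h0, zero_smul] at hc; exact hz3ne hc.symm
    have : φ z3 = φ z1 := by
      apply (hφscal z3 z1 hz3ne hz1ne).2
      exact ⟨c, hcne, by rw [← hc, Algebra.smul_def]⟩
    rw [hz3φ, hz1φ] at this
    exact haa' this.symm
  -- W2 := Z1 ⊓ Z2 has rank ≥ 2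
  have hcomp : L1 ∘ₗ L1 = L2 := by
    ext x; simp [hL1, hL2, LinearMap.mulLeft_apply, mul_assoc]
  have hZ2eq : Z1.comap L1 = Z2 := by
    rw [hZ1, ← Submodule.comap_comp, hcomp, hZ2]
  set W2 : Submodule F K := Z1 ⊓ Z2 with hW2
  have hW2comap : W2 = W1.comap L1 := by
    rw [hW2, hW1, Submodule.comap_inf, hZ2eq, ← hZ1]
  have hW2rank : 2 ≤ finrank F W2 := by
    have := LinearEquiv.finrank_eq (LinearEquiv.ofSubmodule' eβ W1)
    rw [heβlin] at this
    rw [hW2comap, this]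
    exact hW1rank
  -- rank of intersection
  have hsup : finrank F (W1 ⊔ W2 : Submodule F K) ≤ 3 := by
    have hle : W1 ⊔ W2 ≤ Z1 := sup_le (hW1 ▸ inf_le_right) (hW2 ▸ inf_le_left)
    calc finrank F (W1 ⊔ W2 : Submodule F K) ≤ finrank F Z1 :=
      Submodule.finrank_mono hle
    _ = 3 := hZ1rank
  have hinfrank : 1 ≤ finrank F (W1 ⊓ W2 : Submodule F K) := by
    have := Submodule.finrank_sup_add_finrank_inf_eq W1 W2
    omega
  obtain ⟨x, hxW, hxne⟩ : ∃ x, x ∈ W1 ⊓ W2 ∧ x ≠ 0 := by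
    have hne : W1 ⊓ W2 ≠ ⊥ := by
      intro h
      rw [h, finrank_bot] at hinfrank
      omega
    obtain ⟨x, hx, hxne⟩ := Submodule.exists_mem_ne_zero_of_ne_bot hne
    exact ⟨x, hx, hxne⟩
  have hxZ : x ∈ Z := (Submodule.mem_inf.1 (Submodule.mem_inf.1 hxW).1).1
  have hxZ1 : x ∈ Z1 := (Submodule.mem_inf.1 (Submodule.mem_inf.1 hxW).1).2
  have hxZ2 : x ∈ Z2 := (Submodule.mem_inf.1 (Submodule.mem_inf.1 hxW).2).2
  have hbxZ : bK * x ∈ Z := by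
    have := hxZ1
    rw [hZ1, Submodule.mem_comap, hL1, LinearMap.mulLeft_apply] at this
    exact this
  have hbbxZ : bK * bK * x ∈ Z := by
    have := hxZ2
    rw [hZ2, Submodule.mem_comap, hL2, LinearMap.mulLeft_apply] at this
    exact this
  -- β ∉ F
  have hβF : bK ∉ (algebraMap F K).range := by
    rintro ⟨c, hc⟩
    have := hcore n ⟨c, hc⟩
    rw [hncast] at this
    exact hd0 this
  -- linear independence
  have hli : LinearIndependent F ![x, bK * x, bK * bK * x] := by
    rw [Fintype.linearIndependent_iff]
    intro g hg
    rw [Fin.sum_univ_three] at hg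
    simp only [Matrix.cons_val_zero, Matrix.cons_val_one, Matrix.head_cons,
      Matrix.cons_val_two, Matrix.tail_cons] at hg
    have hfact : (algebraMap F K (g 0) + algebraMap F K (g 1) * bK +
        algebraMap F K (g 2) * bK ^ 2) * x = 0 := by
      rw [Algebra.smul_def, Algebra.smul_def, Algebra.smul_def] at hg
      linear_combination hg
    have hzero : algebraMap F K (g 0) + algebraMap F K (g 1) * bK +
        algebraMap F K (g 2) * bK ^ 2 = 0 := by
      rcases mul_eq_zero.1 hfact with h | h
      · exact h
      · exact absurd h hxne
    obtain ⟨h0, h1, h2⟩ := aux_quad_zero h5 bK hβF (g 0) (g 1) (g 2) hzero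
    intro i
    fin_cases i
    · exact h0
    · exact h1
    · exact h2
  -- span equality
  have hrange : Set.range ![x, bK * x, bK * bK * x] = {x, bK * x, bK * bK * x} := by
    ext w
    constructor
    · rintro ⟨i, rfl⟩
      fin_cases i
      · exact Set.mem_insert _ _
      · exact Set.mem_insert_iff.2 (Or.inr (Set.mem_insert _ _))
      · exact Set.mem_insert_iff.2 (Or.inr (Set.mem_insert_iff.2 (Or.inr rfl)))
    · intro hw
      simp only [Set.mem_insert_iff, Set.mem_singleton_iff] at hw
      rcases hw with h | h | h
      · exact ⟨0, by simp [h]⟩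
      · exact ⟨1, by simp [h]⟩
      · exact ⟨2, by simp [h]⟩
  have hspanrank : finrank F (Submodule.span F {x, bK * x, bK * bK * x}) = 3 := by
    rw [← hrange, finrank_span_eq_card hli]
    simp
  have hspanle : Submodule.span F {x, bK * x, bK * bK * x} ≤ Z := by
    rw [Submodule.span_le]
    rintro w hw
    simp only [Set.mem_insert_iff, Set.mem_singleton_iff] at hw
    rcases hw with rfl | rfl | rfl
    · exact hxZ
    · exact hbxZ
    · exact hbbxZ
  have hspanZ : Z = Submodule.span F {x, bK * x, bK * bK * x} :=
    (Submodule.eq_of_le_of_finrank_le hspanle (by omega)).symm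
  -- normalize the exponent
  set ux : Kˣ := Units.mk0 x hxne with hux
  set rx : ℕ := e ux with hrx
  have hxα : (α : K) ^ rx = x := by rw [hrx, heK]; simp [hux]
  set r : ℕ := rx % s with hr
  have hrs : r < s := Nat.mod_lt _ (by omega)
  set cb : F := c0 ^ (rx / s) with hcb
  have hcbne : cb ≠ 0 := pow_ne_zero _ hc0ne
  have hcbα : algebraMap F K cb = (α : K) ^ (s * (rx / s)) := by
    rw [hcb, map_pow, hc0, ← pow_mul]
  have hxeq : x = algebraMap F K cb * (α : K) ^ r := by
    rw [hcbα, ← pow_add, ← hxα]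
    congr 1
    rw [hr]
    exact (Nat.div_add_mod rx s).symm
  have hbxeq : bK * x = algebraMap F K cb * (α : K) ^ (r + n) := by
    rw [hxeq, hbK, pow_add]
    ring
  have hbbxeq : bK * bK * x = algebraMap F K cb * (α : K) ^ (r + 2 * n) := by
    rw [hxeq, hbK, pow_add, two_mul, pow_add]
    ring
  refine ⟨r, n, Nat.le_sub_one_of_lt hrs, hn1, Nat.le_sub_one_of_lt hns, ?_⟩
  rw [hspanZ, hbbxeq, hbxeq, hxeq]
  exact aux_span_scale cb hcbne _ _ _
end

section
/- Let q be a prime power and α a primitive element of F_{q^5}. If Z = span{α^r, α^{r+i}, α^{r+2i}} is a 3-dimensional subspace of F_{q^5}, then Z contains at least q+1 distinct 2-dimensional subspaces of the form span{α^m, α^{m+i}} (i.e., at least q+1 members of the E_2-equivalence class of span{1, α^i}). -/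
theorem at_least_q_add_one_subspaces (q : ℕ) (F K : Type*) [Field F] [Fintype F]
    (hF : Fintype.card F = q) [Field K] [Algebra F K] (h5 : Module.finrank F K = 5)
    (α : Kˣ) (hα : orderOf α = q ^ 5 - 1) (r i : ℕ) (hi : 1 ≤ i)
    (Z : Submodule F K)
    (hZdef : Z = Submodule.span F {(α : K) ^ r, (α : K) ^ (r + i), (α : K) ^ (r + 2 * i)})
    (hZ : Module.finrank F Z = 3) :
    q + 1 ≤ Nat.card {W : Submodule F K // W ≤ Z ∧
      ∃ m : ℕ, W = Submodule.span F {(α : K) ^ m, (α : K) ^ (m + i)}} := by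
  classical
  haveI : Module.Finite F K := Module.finite_of_finrank_eq_succ h5
  haveI : Finite K := Module.finite_of_finite F
  haveI : Fintype K := Fintype.ofFinite K
  have hcardK : Fintype.card K = q ^ 5 := by
    rw [Module.card_eq_pow_finrank (K := F) (V := K), hF, h5]
  -- every nonzero element is a natural power of α
  have hgen : ∀ x : K, x ≠ 0 → ∃ m : ℕ, x = (α : K) ^ m := by
    intro x hx
    have htop : Subgroup.zpowers α = ⊤ := by
      apply Subgroup.eq_top_of_card_eq
      rw [Nat.card_zpowers, hα, Nat.card_eq_fintype_card, Fintype.card_units, hcardK]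
    have hu : Units.mk0 x hx ∈ Subgroup.zpowers α := htop ▸ Subgroup.mem_top _
    rw [← mem_powers_iff_mem_zpowers] at hu
    obtain ⟨m, hm⟩ := hu
    exact ⟨m, by simpa using (congrArg Units.val hm).symm⟩
  -- Z is not contained in the span of two elements
  have hcontr : ∀ a b : K, Z ≤ Submodule.span F {a, b} → False := by
    intro a b hle
    have h1 : Module.finrank F (Submodule.span F ({a, b} : Set K)) ≤ 2 := by
      have h := finrank_span_finset_le_card (R := F) ({a, b} : Finset K)
      have hc : ({a, b} : Finset K).card ≤ 2 := by
        apply le_trans (Finset.card_insert_le _ _); simp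
      have hco : (({a, b} : Finset K) : Set K) = ({a, b} : Set K) := by simp
      rw [hco] at h
      exact le_trans h hc
    have h2 : Module.finrank F Z ≤ Module.finrank F (Submodule.span F ({a, b} : Set K)) :=
      Submodule.finrank_mono hle
    omega
  -- membership of generators in Z
  have hr : (α : K) ^ r ∈ Z := by
    rw [hZdef]; exact Submodule.subset_span (by simp)
  have hri : (α : K) ^ (r + i) ∈ Z := by
    rw [hZdef]; exact Submodule.subset_span (by simp)
  have hr2i : (α : K) ^ (r + 2 * i) ∈ Z := by
    rw [hZdef]; exact Submodule.subset_span (by simp)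
  -- spans containing the three generators contain Z
  have hlespan : ∀ W : Submodule F K, (α : K) ^ r ∈ W → (α : K) ^ (r + i) ∈ W →
      (α : K) ^ (r + 2 * i) ∈ W → Z ≤ W := by
    intro W h1 h2 h3
    rw [hZdef, Submodule.span_le]
    intro x hx
    rcases hx with h | h | h <;> subst h <;> assumption
  -- the elements x β
  set x : F → K := fun β => (α : K) ^ r + β • (α : K) ^ (r + i) with hxdef
  have hxmem : ∀ β : F, x β ∈ Z := fun β => Z.add_mem hr (Z.smul_mem β hri)
  have hximem : ∀ β : F, (α : K) ^ i * x β ∈ Z := by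
    intro β
    have : (α : K) ^ i * x β = (α : K) ^ (r + i) + β • (α : K) ^ (r + 2 * i) := by
      simp only [hxdef]
      rw [mul_add, Algebra.mul_smul_comm, ← pow_add, ← pow_add]
      ring_nf
    rw [this]
    exact Z.add_mem hri (Z.smul_mem β hr2i)
  have hxne : ∀ β : F, x β ≠ 0 := by
    intro β h0
    apply hcontr ((α : K) ^ (r + i)) ((α : K) ^ (r + 2 * i))
    apply hlespan
    · have : (α : K) ^ r = (-β) • (α : K) ^ (r + i) := by
        have := h0; simp only [hxdef] at this
        rw [neg_smul]; linear_combination this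
      rw [this]
      exact Submodule.smul_mem _ _ (Submodule.subset_span (by simp))
    · exact Submodule.subset_span (by simp)
    · exact Submodule.subset_span (by simp)
  -- the family of subspaces
  let g : Option F → Submodule F K := fun o =>
    match o with
    | none => Submodule.span F {(α : K) ^ (r + i), (α : K) ^ (r + 2 * i)}
    | some β => Submodule.span F {x β, (α : K) ^ i * x β}
  have hgP : ∀ o : Option F, g o ≤ Z ∧
      ∃ m : ℕ, g o = Submodule.span F {(α : K) ^ m, (α : K) ^ (m + i)} := by
    intro o
    match o with
    | none =>
      constructor
      · rw [Submodule.span_le]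
        intro y hy
        rcases hy with h | h <;> subst h <;> assumption
      · refine ⟨r + i, ?_⟩
        have : r + i + i = r + 2 * i := by ring
        rw [this]
    | some β =>
      constructor
      · rw [Submodule.span_le]
        intro y hy
        rcases hy with h | h <;> subst h
        · exact hxmem β
        · exact hximem β
      · obtain ⟨m, hm⟩ := hgen (x β) (hxne β)
        refine ⟨m, ?_⟩
        have h2 : (α : K) ^ (m + i) = (α : K) ^ i * x β := by
          rw [hm, ← pow_add]; ring_nf
        show Submodule.span F {x β, (α : K) ^ i * x β} = _
        rw [← hm, ← h2]
  -- injectivity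
  have hginj : Function.Injective g := by
    intro o1 o2 heq
    by_contra hne
    -- helper: if x β and α^i * x β are in span {α^(r+i), α^(r+2i)}-type situations
    match o1, o2 with
    | none, none => exact hne rfl
    | some β, some γ =>
      have hβγ : β ≠ γ := fun h => hne (by rw [h])
      set W := Submodule.span F {x γ, (α : K) ^ i * x γ} with hW
      have heq' : Submodule.span F {x β, (α : K) ^ i * x β} = W := heq
      have hxβ : x β ∈ W := heq' ▸ Submodule.subset_span (by simp)
      have hxγ : x γ ∈ W := Submodule.subset_span (by simp)
      have hxiβ : (α : K) ^ i * x β ∈ W := heq' ▸ Submodule.subset_span (by simp)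
      have hxiγ : (α : K) ^ i * x γ ∈ W := Submodule.subset_span (by simp)
      have hd : (β - γ) • (α : K) ^ (r + i) = x β - x γ := by
        simp only [hxdef]; rw [sub_smul]; ring
      have hri' : (α : K) ^ (r + i) ∈ W := by
        have h1 : (β - γ) • (α : K) ^ (r + i) ∈ W := hd ▸ W.sub_mem hxβ hxγ
        have h2 := W.smul_mem (β - γ)⁻¹ h1
        rwa [smul_smul, inv_mul_cancel₀ (sub_ne_zero.mpr hβγ), one_smul] at h2
      have hd2 : (β - γ) • (α : K) ^ (r + 2 * i) = (α : K) ^ i * x β - (α : K) ^ i * x γ := by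
        simp only [hxdef]
        rw [sub_smul, mul_add, mul_add, Algebra.mul_smul_comm, Algebra.mul_smul_comm,
          ← pow_add, ← pow_add]
        ring_nf
      have hr2i' : (α : K) ^ (r + 2 * i) ∈ W := by
        have h1 : (β - γ) • (α : K) ^ (r + 2 * i) ∈ W := hd2 ▸ W.sub_mem hxiβ hxiγ
        have h2 := W.smul_mem (β - γ)⁻¹ h1
        rwa [smul_smul, inv_mul_cancel₀ (sub_ne_zero.mpr hβγ), one_smul] at h2
      have hr' : (α : K) ^ r ∈ W := by
        have : (α : K) ^ r = x β - β • (α : K) ^ (r + i) := by simp [hxdef]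
        rw [this]
        exact W.sub_mem hxβ (W.smul_mem β hri')
      exact hcontr _ _ (hlespan W hr' hri' hr2i')
    | some β, none =>
      set W := Submodule.span F ({(α : K) ^ (r + i), (α : K) ^ (r + 2 * i)} : Set K) with hW
      have heq' : Submodule.span F {x β, (α : K) ^ i * x β} = W := heq
      have hxβ : x β ∈ W := heq' ▸ Submodule.subset_span (by simp)
      have hri' : (α : K) ^ (r + i) ∈ W := Submodule.subset_span (by simp)
      have hr2i' : (α : K) ^ (r + 2 * i) ∈ W := Submodule.subset_span (by simp)
      have hr' : (α : K) ^ r ∈ W := by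
        have : (α : K) ^ r = x β - β • (α : K) ^ (r + i) := by simp [hxdef]
        rw [this]
        exact W.sub_mem hxβ (W.smul_mem β hri')
      exact hcontr _ _ (hlespan W hr' hri' hr2i')
    | none, some β =>
      set W := Submodule.span F ({(α : K) ^ (r + i), (α : K) ^ (r + 2 * i)} : Set K) with hW
      have heq' : Submodule.span F {x β, (α : K) ^ i * x β} = W := heq.symm
      have hxβ : x β ∈ W := heq' ▸ Submodule.subset_span (by simp)
      have hri' : (α : K) ^ (r + i) ∈ W := Submodule.subset_span (by simp)
      have hr2i' : (α : K) ^ (r + 2 * i) ∈ W := Submodule.subset_span (by simp)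
      have hr' : (α : K) ^ r ∈ W := by
        have : (α : K) ^ r = x β - β • (α : K) ^ (r + i) := by simp [hxdef]
        rw [this]
        exact W.sub_mem hxβ (W.smul_mem β hri')
      exact hcontr _ _ (hlespan W hr' hri' hr2i')
  -- conclude
  haveI : Finite (Submodule F K) :=
    Finite.of_injective (fun W : Submodule F K => (W : Set K)) SetLike.coe_injective
  let f : Option F → {W : Submodule F K // W ≤ Z ∧
      ∃ m : ℕ, W = Submodule.span F {(α : K) ^ m, (α : K) ^ (m + i)}} :=
    fun o => ⟨g o, hgP o⟩
  have hfinj : Function.Injective f := fun a b h => hginj (congrArg Subtype.val h)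
  have := Nat.card_le_card_of_injective f hfinj
  rwa [Nat.card_eq_fintype_card, Fintype.card_option, hF] at this
end

section
/- Let q be a prime power and α a primitive element of F_{q^5}. Each 3-dimensional F_q-subspace Z of F_{q^5} contains exactly q+1 two-dimensional subspaces from exactly one E_2-equivalence class, and exactly one two-dimensional subspace from each of the other q^2 equivalence classes of E_2. -/
open Module

section
variable {F K : Type*} [Field F] [Field K] [Algebra F K]

lemma aux_stab (h5 : Module.finrank F K = 5) (V : Submodule F K) (h1 : V ≠ ⊥) (h2 : V ≠ ⊤)
    (β : K) (hβ : ∀ v ∈ V, β * v ∈ V) : ∃ c : F, algebraMap F K c = β := by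
  have hfd : FiniteDimensional F K := Module.finite_of_finrank_pos (by rw [h5]; norm_num)
  set L := IntermediateField.adjoin F {β} with hLdef
  have hd : Module.finrank F L * Module.finrank L K = 5 := by
    rw [← h5]; exact Module.finrank_mul_finrank F L K
  have hdvd : Module.finrank F L ∣ 5 := ⟨_, hd.symm⟩
  have hp : Nat.Prime 5 := by norm_num
  rcases (Nat.Prime.eq_one_or_self_of_dvd hp _ hdvd) with hone | hfive
  · -- L = ⊥
    have hLbot : L = ⊥ := IntermediateField.finrank_eq_one_iff.mp hone
    have hmem : β ∈ L := IntermediateField.mem_adjoin_simple_self F β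
    rw [hLbot] at hmem
    exact IntermediateField.mem_bot.mp hmem
  · -- adjoin = ⊤, derive contradiction
    exfalso
    have hint : IsIntegral F β := IsIntegral.of_finite F β
    have hsub : L.toSubalgebra = Algebra.adjoin F {β} :=
      IntermediateField.adjoin_simple_toSubalgebra_of_isAlgebraic hint.isAlgebraic
    have hfr : Module.finrank F (Subalgebra.toSubmodule (Algebra.adjoin F {β})) = 5 := by
      rw [← hsub]
      simpa [IntermediateField.finrank_eq_finrank_subalgebra L] using hfive
    have htop : Subalgebra.toSubmodule (Algebra.adjoin F {β}) = ⊤ :=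
      Submodule.eq_top_of_finrank_eq (by rw [hfr, h5])
    have hadj : Algebra.adjoin F {β} = ⊤ := Algebra.toSubmodule_eq_top.mp htop
    -- every k stabilizes V
    have hstab : ∀ k : K, ∀ v ∈ V, k * v ∈ V := by
      intro k
      have hk : k ∈ Algebra.adjoin F {β} := hadj ▸ Algebra.mem_top
      induction hk using Algebra.adjoin_induction with
      | mem x hx => intro v hv; rcases hx with rfl; exact hβ v hv
      | algebraMap c => intro v hv; rw [← Algebra.smul_def]; exact V.smul_mem c hv
      | add a b ha hb iha ihb => intro v hv; rw [add_mul]; exact V.add_mem (iha v hv) (ihb v hv)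
      | mul a b ha hb iha ihb => intro v hv; rw [mul_assoc]; exact iha _ (ihb v hv)
    -- V = ⊤
    apply h2
    rw [Submodule.eq_top_iff']
    intro k
    obtain ⟨v₀, hv₀, hv₀ne⟩ := Submodule.exists_mem_ne_zero_of_ne_bot h1
    have := hstab (k * v₀⁻¹) v₀ hv₀
    rwa [mul_assoc, inv_mul_cancel₀ hv₀ne, mul_one] at this


lemma aux_map_mul (a b : K) (V : Submodule F K) :
    V.map (LinearMap.mulLeft F (a * b)) = (V.map (LinearMap.mulLeft F b)).map (LinearMap.mulLeft F a) := by
  rw [← Submodule.map_comp, ← LinearMap.mulLeft_mul]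

noncomputable def mulLeftEquiv (a : K) (ha : a ≠ 0) : K ≃ₗ[F] K :=
  LinearEquiv.ofLinear (LinearMap.mulLeft F a) (LinearMap.mulLeft F a⁻¹)
    (by ext x; simp [LinearMap.mulLeft_apply, ← mul_assoc, mul_inv_cancel₀ ha])
    (by ext x; simp [LinearMap.mulLeft_apply, ← mul_assoc, inv_mul_cancel₀ ha])

lemma aux_finrank_map (a : K) (ha : a ≠ 0) (V : Submodule F K) :
    finrank F (V.map (LinearMap.mulLeft F a)) = finrank F V := by
  have : (LinearMap.mulLeft F a) = (mulLeftEquiv (F := F) a ha : K →ₗ[F] K) := rfl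
  rw [this, LinearEquiv.finrank_map_eq]

lemma aux_count [Fintype F] {q : ℕ} (hF : Fintype.card F = q) (h5 : Module.finrank F K = 5)
    (Z' : Submodule F K) (X : Submodule F K) (hX : finrank F X = 2)
    (x₀ x₁ : K) (hx₀ : x₀ ∈ X) (hx₁ : x₁ ∈ X) (hx₀ne : x₀ ≠ 0)
    (hspan : X = Submodule.span F {x₀, x₁}) :
    (q - 1) * Nat.card {W : Submodule F K // W ≤ Z' ∧ ∃ β : Kˣ, W = X.map (LinearMap.mulLeft F (β : K))}
      = Nat.card ↥(Z' ⊓ Z'.comap (LinearMap.mulLeft F (x₁ * x₀⁻¹))) - 1 := by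
  have hfd : FiniteDimensional F K := Module.finite_of_finrank_pos (by rw [h5]; norm_num)
  have hfin : Finite K := Finite.of_equiv _ (Module.finBasis F K).equivFun.symm.toEquiv
  set t := x₁ * x₀⁻¹ with ht
  set T := Z' ⊓ Z'.comap (LinearMap.mulLeft F t) with hT
  have hmapX : ∀ γ : K, γ ≠ 0 → γ ∈ T →
      X.map (LinearMap.mulLeft F (γ * x₀⁻¹)) ≤ Z' := by
    intro γ hγ hγT
    rw [hspan, Submodule.map_span, Set.image_pair, Submodule.span_le]
    have h1 : (LinearMap.mulLeft F (γ * x₀⁻¹)) x₀ = γ := by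
      simp [LinearMap.mulLeft_apply, mul_assoc, inv_mul_cancel₀ hx₀ne]
    have h2 : (LinearMap.mulLeft F (γ * x₀⁻¹)) x₁ = t * γ := by
      simp only [LinearMap.mulLeft_apply, ht]; ring
    rw [h1, h2]
    rintro y hy
    rcases hy with rfl | rfl
    · exact hγT.1
    · exact hγT.2
  classical
  set D := {γ : ↥T // γ ≠ 0} with hD
  set Tgt := {W : Submodule F K // W ≤ Z' ∧ ∃ β : Kˣ, W = X.map (LinearMap.mulLeft F (β : K))}
    with hTgt
  have coe_ne : ∀ γ : D, (γ.1 : K) ≠ 0 := by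
    intro γ h
    exact γ.2 (Subtype.ext h)
  set Φ : D → Tgt := fun γ =>
    ⟨X.map (LinearMap.mulLeft F ((γ.1 : K) * x₀⁻¹)),
     hmapX _ (coe_ne γ) γ.1.2,
     ⟨Units.mk0 _ (mul_ne_zero (coe_ne γ) (inv_ne_zero hx₀ne)), rfl⟩⟩ with hΦ
  -- Φ is surjective
  have hsurj : Function.Surjective Φ := by
    rintro ⟨W, hWZ, β, rfl⟩
    have hγT : (β : K) * x₀ ∈ T := by
      constructor
      · exact hWZ (Submodule.mem_map_of_mem hx₀)
      · show t * ((β : K) * x₀) ∈ Z'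
        have : t * ((β : K) * x₀) = (β : K) * x₁ := by
          rw [ht]; field_simp
        rw [this]
        exact hWZ (Submodule.mem_map_of_mem hx₁)
    have hγne : (β : K) * x₀ ≠ 0 := mul_ne_zero β.ne_zero hx₀ne
    refine ⟨⟨⟨_, hγT⟩, fun h => hγne (congrArg Subtype.val h)⟩, ?_⟩
    apply Subtype.ext
    show X.map (LinearMap.mulLeft F ((β : K) * x₀ * x₀⁻¹)) = _
    rw [mul_assoc, mul_inv_cancel₀ hx₀ne, mul_one]
  -- fibers are Fˣ-orbits
  have hfiber : ∀ γ γ' : D, Φ γ = Φ γ' → ∃ c : Fˣ, γ'.1 = (c : F) • γ.1 := by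
    intro γ γ' h
    have hVeq : X.map (LinearMap.mulLeft F ((γ.1 : K) * x₀⁻¹))
        = X.map (LinearMap.mulLeft F ((γ'.1 : K) * x₀⁻¹)) := congrArg Subtype.val h
    set V := X.map (LinearMap.mulLeft F ((γ.1 : K) * x₀⁻¹)) with hV
    have hfr : finrank F V = 2 := by
      rw [hV, aux_finrank_map _ (mul_ne_zero (coe_ne γ) (inv_ne_zero hx₀ne)), hX]
    have hVbot : V ≠ ⊥ := by
      intro h; rw [h, finrank_bot] at hfr; omega
    have hVtop : V ≠ ⊤ := by
      intro h; rw [h, finrank_top, h5] at hfr; omega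
    have hstabV : ∀ v ∈ V, (γ'.1 : K) * (γ.1 : K)⁻¹ * v ∈ V := by
      rintro v ⟨u, hu, rfl⟩
      have : (γ'.1 : K) * (γ.1 : K)⁻¹ * ((LinearMap.mulLeft F ((γ.1 : K) * x₀⁻¹)) u)
          = (LinearMap.mulLeft F ((γ'.1 : K) * x₀⁻¹)) u := by
        simp only [LinearMap.mulLeft_apply]
        rw [show (γ'.1 : K) * (γ.1 : K)⁻¹ * ((γ.1 : K) * x₀⁻¹ * u)
            = ((γ.1 : K)⁻¹ * (γ.1 : K)) * ((γ'.1 : K) * x₀⁻¹ * u) by ring,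
          inv_mul_cancel₀ (coe_ne γ), one_mul]
      rw [this, hVeq]
      exact Submodule.mem_map_of_mem hu
    obtain ⟨c, hc⟩ := aux_stab h5 V hVbot hVtop ((γ'.1 : K) * (γ.1 : K)⁻¹) hstabV
    have hcne : c ≠ 0 := by
      intro h
      rw [h, map_zero] at hc
      rcases mul_eq_zero.mp hc.symm with h3 | h3
      · exact coe_ne γ' h3
      · exact coe_ne γ (inv_eq_zero.mp h3)
    refine ⟨Units.mk0 c hcne, ?_⟩
    apply Subtype.ext
    show (γ'.1 : K) = (c : F) • (γ.1 : K)
    rw [Algebra.smul_def, hc, mul_assoc, inv_mul_cancel₀ (coe_ne γ), mul_one]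
  -- smul invariance of Φ
  have hsmul : ∀ (c : Fˣ) (γ δ : D), (δ.1 : ↥T) = (c : F) • γ.1 → Φ δ = Φ γ := by
    intro c γ δ hδ
    apply Subtype.ext
    show X.map (LinearMap.mulLeft F ((δ.1 : K) * x₀⁻¹))
        = X.map (LinearMap.mulLeft F ((γ.1 : K) * x₀⁻¹))
    have hco : (δ.1 : K) = algebraMap F K (c : F) * (γ.1 : K) := by
      have := congrArg Subtype.val hδ
      rw [this]
      exact Algebra.smul_def _ _
    rw [hco, mul_assoc, aux_map_mul]
    apply le_antisymm
    · rintro v ⟨u, hu, rfl⟩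
      show algebraMap F K (c : F) * u ∈ _
      rw [← Algebra.smul_def]
      exact Submodule.smul_mem _ _ hu
    · intro v hv
      refine ⟨((c⁻¹ : Fˣ) : F) • v, Submodule.smul_mem _ _ hv, ?_⟩
      show algebraMap F K (c : F) * _ = v
      rw [← Algebra.smul_def, smul_smul, Units.mul_inv, one_smul]
  -- build the equivalence Fˣ × Tgt ≃ D
  obtain ⟨sec, hsec⟩ := hsurj.hasRightInverse
  have hne : ∀ p : Fˣ × Tgt, ((p.1 : F) • (sec p.2).1 : ↥T) ≠ 0 := by
    intro p h
    apply coe_ne (sec p.2)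
    have h2 : (p.1 : F) • ((sec p.2).1 : K) = 0 := congrArg Subtype.val h
    rcases smul_eq_zero.mp h2 with h3 | h3
    · exact absurd h3 p.1.ne_zero
    · exact h3
  set e : Fˣ × Tgt → D := fun p => ⟨(p.1 : F) • (sec p.2).1, hne p⟩ with he
  have hcard : Nat.card (Fˣ × Tgt) = Nat.card D := by
    apply Nat.card_congr
    refine Equiv.ofBijective e ⟨?_, ?_⟩
    · intro p p' hpq
      have h1 : Φ (e p) = Φ (sec p.2) := hsmul p.1 (sec p.2) (e p) rfl
      have h2 : Φ (e p') = Φ (sec p'.2) := hsmul p'.1 (sec p'.2) (e p') rfl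
      rw [hpq] at h1
      have hW : p.2 = p'.2 := by
        have h3 := (h1.symm.trans h2)
        rwa [hsec p.2, hsec p'.2] at h3
      have hval : (p.1 : F) • ((sec p.2).1 : K) = (p'.1 : F) • ((sec p'.2).1 : K) := by
        have := congrArg (fun x : D => ((x.1 : ↥T) : K)) hpq
        exact this
      rw [← hW] at hval
      have hc : (p.1 : F) = (p'.1 : F) :=
        smul_left_injective F (coe_ne (sec p.2)) hval
      have : p.1 = p'.1 := Units.ext hc
      exact Prod.ext this hW
    · intro γ
      obtain ⟨c, hc⟩ := hfiber (sec (Φ γ)) γ (hsec (Φ γ))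
      exact ⟨⟨c, Φ γ⟩, Subtype.ext hc.symm⟩
  -- cardinalities
  have hDcard : Nat.card D = Nat.card ↥T - 1 := by
    letI : Fintype ↥T := Fintype.ofFinite _
    rw [Nat.card_eq_fintype_card, Nat.card_eq_fintype_card]
    have : Fintype.card D = Fintype.card ↥T - Fintype.card {γ : ↥T // γ = 0} := by
      classical
      exact Fintype.card_subtype_compl _
    rw [this, Fintype.card_subtype_eq]
  have hFu : Nat.card Fˣ = q - 1 := by
    rw [Nat.card_eq_fintype_card, Fintype.card_units, hF]
  rw [← hDcard, ← hcard, Nat.card_prod, hFu]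


lemma aux_basis (X : Submodule F K) (hfd : FiniteDimensional F K) (hX : finrank F X = 2) :
    ∃ x₀ x₁ : K, x₀ ∈ X ∧ x₁ ∈ X ∧ x₀ ≠ 0 ∧
      (∀ c : F, algebraMap F K c ≠ x₁ * x₀⁻¹) ∧ X = Submodule.span F {x₀, x₁} := by
  have : Module.Finite F ↥X := inferInstance
  let b : Basis (Fin 2) F ↥X := finBasisOfFinrankEq F ↥X hX
  refine ⟨(b 0 : K), (b 1 : K), (b 0).2, (b 1).2, ?_, ?_, ?_⟩
  · intro h
    exact b.ne_zero 0 (Subtype.ext h)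
  · intro c hc
    have hx0 : (b 0 : K) ≠ 0 := fun h => b.ne_zero 0 (Subtype.ext h)
    have h1 : (b 1 : K) = c • (b 0 : K) := by
      have : algebraMap F K c * (b 0 : K) = (b 1 : K) := by
        rw [hc, mul_assoc, inv_mul_cancel₀ hx0, mul_one]
      rw [← this, Algebra.smul_def]
    have h2 : b 1 = c • b 0 := Subtype.ext (by simpa using h1)
    have hli := b.linearIndependent
    rw [Fintype.linearIndependent_iff] at hli
    have := hli ![c, -1] (by
      rw [Fin.sum_univ_two]
      simp only [Matrix.cons_val_zero, Matrix.cons_val_one, Matrix.head_cons]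
      rw [← h2]
      module) 1
    simp at this
  · apply le_antisymm
    · intro x hx
      rw [Submodule.mem_span_pair]
      have := b.sum_repr ⟨x, hx⟩
      rw [Fin.sum_univ_two] at this
      refine ⟨b.repr ⟨x, hx⟩ 0, b.repr ⟨x, hx⟩ 1, ?_⟩
      have := congrArg (Subtype.val : ↥X → K) this
      simpa using this
    · rw [Submodule.span_le]
      rintro y hy
      rcases hy with rfl | rfl
      · exact (b 0).2
      · exact (b 1).2

lemma aux_comap_eq (t : K) (ht : t ≠ 0) (Z : Submodule F K) :
    Z.comap (LinearMap.mulLeft F t) = Z.map (LinearMap.mulLeft F t⁻¹) := by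
  ext γ
  constructor
  · intro h
    exact ⟨t * γ, h, by show t⁻¹ * (t * γ) = γ; rw [← mul_assoc, inv_mul_cancel₀ ht, one_mul]⟩
  · rintro ⟨u, hu, rfl⟩
    show t * (t⁻¹ * u) ∈ Z
    rwa [← mul_assoc, mul_inv_cancel₀ ht, one_mul]


lemma aux_card_submodule [Fintype F] {q : ℕ} (hF : Fintype.card F = q)
    [FiniteDimensional F K] (T : Submodule F K) : Nat.card ↥T = q ^ finrank F T := by
  have hfin : Finite ↥T := Finite.of_equiv _ (Module.finBasis F ↥T).equivFun.symm.toEquiv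
  letI : Fintype ↥T := Fintype.ofFinite _
  rw [Nat.card_eq_fintype_card, card_eq_pow_finrank (K := F) (V := ↥T), hF]

lemma aux_count_values [Fintype F] {q : ℕ} (hF : Fintype.card F = q) (hq : 2 ≤ q)
    (h5 : finrank F K = 5) (Z : Submodule F K) (hZ : finrank F Z = 3)
    (X : Submodule F K) (hX : finrank F X = 2) :
    Nat.card {W : Submodule F K // W ≤ Z ∧ ∃ β : Kˣ, W = X.map (LinearMap.mulLeft F (β : K))} = 1
    ∨ Nat.card {W : Submodule F K // W ≤ Z ∧ ∃ β : Kˣ, W = X.map (LinearMap.mulLeft F (β : K))} = q + 1 := by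
  have hfd : FiniteDimensional F K := Module.finite_of_finrank_pos (by rw [h5]; norm_num)
  obtain ⟨x₀, x₁, hx₀, hx₁, hx₀ne, hnr, hspan⟩ := aux_basis X hfd hX
  set t := x₁ * x₀⁻¹ with ht
  have htne : t ≠ 0 := fun h => hnr 0 (by rw [map_zero, h])
  set T := Z ⊓ Z.comap (LinearMap.mulLeft F t) with hT
  have hcount := aux_count hF h5 Z X hX x₀ x₁ hx₀ hx₁ hx₀ne hspan
  rw [← ht, ← hT] at hcount
  have hcomap : finrank F (Z.comap (LinearMap.mulLeft F t)) = 3 := by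
    rw [aux_comap_eq t htne, aux_finrank_map _ (inv_ne_zero htne), hZ]
  have hle : finrank F T ≤ 2 := by
    by_contra h
    push_neg at h
    have hTZ : T ≤ Z := inf_le_left
    have heq : T = Z := Submodule.eq_of_le_of_finrank_le hTZ (by rw [hZ]; omega)
    have hst : ∀ v ∈ Z, t * v ∈ Z := by
      intro v hv
      have hvT : v ∈ T := heq ▸ hv
      exact hvT.2
    have hZbot : Z ≠ ⊥ := by intro h'; rw [h', finrank_bot] at hZ; omega
    have hZtop : Z ≠ ⊤ := by intro h'; rw [h', finrank_top, h5] at hZ; omega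
    obtain ⟨c, hc⟩ := aux_stab h5 Z hZbot hZtop t hst
    exact hnr c hc
  have hge : 1 ≤ finrank F T := by
    have hsum := Submodule.finrank_sup_add_finrank_inf_eq Z (Z.comap (LinearMap.mulLeft F t))
    have hsup : finrank F ↥(Z ⊔ Z.comap (LinearMap.mulLeft F t)) ≤ 5 := h5 ▸ Submodule.finrank_le _
    rw [hZ, hcomap] at hsum
    rw [← hT] at hsum
    omega
  have hTcard : Nat.card ↥T = q ^ finrank F T := aux_card_submodule hF T
  rw [hTcard] at hcount
  have hq1 : 1 ≤ q := by omega
  rcases (by omega : finrank F T = 1 ∨ finrank F T = 2) with h | h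
  · left
    rw [h, pow_one] at hcount
    have : (q - 1) * Nat.card {W : Submodule F K // W ≤ Z ∧ ∃ β : Kˣ,
        W = X.map (LinearMap.mulLeft F (β : K))} = (q - 1) * 1 := by rw [hcount, mul_one]
    exact Nat.eq_of_mul_eq_mul_left (by omega) this
  · right
    rw [h] at hcount
    have hfact : q ^ 2 - 1 = (q - 1) * (q + 1) := by
      have h2 : 1 ≤ q ^ 2 := Nat.one_le_pow _ _ (by omega)
      have h3 : q ^ 2 = q * q := sq q
      zify [hq1, h2]
      ring
    rw [hfact] at hcount
    exact Nat.eq_of_mul_eq_mul_left (by omega) hcount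

lemma aux_orbit_size [Fintype F] {q : ℕ} (hF : Fintype.card F = q)
    (h5 : finrank F K = 5) (X : Submodule F K) (hX : finrank F X = 2) :
    (q - 1) * Nat.card {W : Submodule F K // W ≤ (⊤ : Submodule F K) ∧ ∃ β : Kˣ,
      W = X.map (LinearMap.mulLeft F (β : K))} = q ^ 5 - 1 := by
  have hfd : FiniteDimensional F K := Module.finite_of_finrank_pos (by rw [h5]; norm_num)
  obtain ⟨x₀, x₁, hx₀, hx₁, hx₀ne, hnr, hspan⟩ := aux_basis X hfd hX
  have hcount := aux_count hF h5 ⊤ X hX x₀ x₁ hx₀ hx₁ hx₀ne hspan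
  have htop : ((⊤ : Submodule F K) ⊓ (⊤ : Submodule F K).comap
      (LinearMap.mulLeft F (x₁ * x₀⁻¹))) = ⊤ := by
    simp [Submodule.comap_top]
  rw [htop] at hcount
  rw [hcount, aux_card_submodule hF ⊤, finrank_top, h5]

end

section
variable {F : Type*} [Field F]

lemma aux_span_pair {V : Type*} [AddCommGroup V] [Module F V] [FiniteDimensional F V]
    {v w : V} (hv : v ≠ 0) (hw : w ∉ Submodule.span F {v}) :
    finrank F (Submodule.span F ({v, w} : Set V)) = 2 := by
  have hwv : w ∈ Submodule.span F ({v, w} : Set V) := Submodule.subset_span (by simp)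
  have hlt : Submodule.span F ({v} : Set V) < Submodule.span F ({v, w} : Set V) :=
    lt_of_le_of_ne (Submodule.span_mono (by simp)) (fun h => hw (h ▸ hwv))
  have h1 : 1 < finrank F (Submodule.span F ({v, w} : Set V)) := by
    have := Submodule.finrank_lt_finrank_of_lt hlt
    rwa [finrank_span_singleton hv] at this
  have hwne : w ≠ 0 := fun h => hw (h ▸ Submodule.zero_mem _)
  have h2 : finrank F (Submodule.span F ({v, w} : Set V)) ≤ 2 := by
    have hun : ({v, w} : Set V) = {v} ∪ {w} := rfl
    rw [hun, Submodule.span_union]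
    have hs := Submodule.finrank_sup_add_finrank_inf_eq
      (Submodule.span F ({v} : Set V)) (Submodule.span F ({w} : Set V))
    rw [finrank_span_singleton hv, finrank_span_singleton hwne] at hs
    omega
  omega

lemma aux_pairs [Fintype F] {q n : ℕ} (hF : Fintype.card F = q)
    (V : Type*) [AddCommGroup V] [Module F V] [FiniteDimensional F V]
    (hn : finrank F V = n) :
    Nat.card {p : V × V // p.1 ≠ 0 ∧ p.2 ∉ Submodule.span F {p.1}} = (q^n - 1) * (q^n - q) := by
  classical
  have hfin : Finite V := Finite.of_equiv _ (Module.finBasis F V).equivFun.symm.toEquiv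
  letI : Fintype V := Fintype.ofFinite V
  have hcardV : Fintype.card V = q ^ n := by
    rw [card_eq_pow_finrank (K := F) (V := V), hF, hn]
  have e : {p : V × V // p.1 ≠ 0 ∧ p.2 ∉ Submodule.span F {p.1}}
      ≃ Σ v : {v : V // v ≠ 0}, {w : V // w ∉ Submodule.span F {(v : V)}} := by
    exact {
      toFun := fun p => ⟨⟨p.1.1, p.2.1⟩, ⟨p.1.2, p.2.2⟩⟩
      invFun := fun s => ⟨⟨s.1.1, s.2.1⟩, s.1.2, s.2.2⟩
      left_inv := fun p => rfl
      right_inv := fun s => rfl }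
  rw [Nat.card_congr e, Nat.card_eq_fintype_card, Fintype.card_sigma]
  have hterm : ∀ v : {v : V // v ≠ 0},
      Fintype.card {w : V // w ∉ Submodule.span F {(v : V)}} = q^n - q := by
    intro v
    have h1 : Fintype.card {w : V // w ∉ Submodule.span F {(v : V)}}
        = Fintype.card V - Fintype.card {w : V // w ∈ Submodule.span F {(v : V)}} :=
      Fintype.card_subtype_compl _
    have h2 : Fintype.card {w : V // w ∈ Submodule.span F {(v : V)}} = q := by
      have : Fintype.card {w : V // w ∈ Submodule.span F {(v : V)}}
          = Fintype.card ↥(Submodule.span F {(v : V)}) := rfl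
      rw [this, card_eq_pow_finrank (K := F), hF, finrank_span_singleton v.2, pow_one]
    rw [h1, h2, hcardV]
  rw [Finset.sum_congr rfl (fun v _ => hterm v), Finset.sum_const, smul_eq_mul]
  congr 1
  have h3 : Fintype.card {v : V // v ≠ 0} = Fintype.card V - Fintype.card {v : V // v = 0} :=
    Fintype.card_subtype_compl _
  rw [Finset.card_univ, h3, Fintype.card_subtype_eq, hcardV]

lemma aux_lines_count [Fintype F] {q n : ℕ} (hF : Fintype.card F = q)
    (V : Type*) [AddCommGroup V] [Module F V] [FiniteDimensional F V]
    (hn : finrank F V = n) :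
    Nat.card {W : Submodule F V // finrank F W = 2} * ((q^2 - 1) * (q^2 - q))
      = (q^n - 1) * (q^n - q) := by
  classical
  have hfin : Finite V := Finite.of_equiv _ (Module.finBasis F V).equivFun.symm.toEquiv
  set P := {p : V × V // p.1 ≠ 0 ∧ p.2 ∉ Submodule.span F {p.1}} with hP
  set L := {W : Submodule F V // finrank F W = 2} with hL
  set f : P → L := fun p => ⟨Submodule.span F {p.1.1, p.1.2}, aux_span_pair p.2.1 p.2.2⟩ with hf
  have hfib : ∀ W : L, Nat.card {p : P // f p = W} = (q^2 - 1) * (q^2 - q) := by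
    intro W
    have hWfd : FiniteDimensional F ↥(W : Submodule F V) := inferInstance
    -- fiber ≃ pairs in ↥W
    have e : {p : P // f p = W} ≃
        {p : ↥(W : Submodule F V) × ↥(W : Submodule F V) //
          p.1 ≠ 0 ∧ p.2 ∉ Submodule.span F {p.1}} := by
      refine {
        toFun := fun p => ⟨⟨⟨p.1.1.1, ?_⟩, ⟨p.1.1.2, ?_⟩⟩, ?_, ?_⟩
        invFun := fun p => ⟨⟨⟨(p.1.1 : V), (p.1.2 : V)⟩, ?_, ?_⟩, ?_⟩
        left_inv := ?_
        right_inv := ?_ }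
      · -- p.1.1.1 ∈ W
        have := congrArg Subtype.val p.2
        exact this ▸ Submodule.subset_span (by simp)
      · have := congrArg Subtype.val p.2
        exact this ▸ Submodule.subset_span (by simp)
      · -- nonzero
        intro h
        exact p.1.2.1 (congrArg Subtype.val h)
      · -- not in span
        intro h
        apply p.1.2.2
        obtain ⟨a, ha⟩ := Submodule.mem_span_singleton.mp h
        exact Submodule.mem_span_singleton.mpr ⟨a, congrArg Subtype.val ha⟩
      · -- coe p.1.1 ≠ 0
        intro h
        exact p.2.1 (Subtype.ext h)
      · -- coe p.1.2 ∉ span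
        intro h
        apply p.2.2
        obtain ⟨a, ha⟩ := Submodule.mem_span_singleton.mp h
        have : a • p.1.1 = p.1.2 := Subtype.ext (by simpa using ha)
        exact Submodule.mem_span_singleton.mpr ⟨a, this⟩
      · -- span = W
        apply Subtype.ext
        show Submodule.span F {(p.1.1 : V), (p.1.2 : V)} = (W : Submodule F V)
        have hle : Submodule.span F {(p.1.1 : V), (p.1.2 : V)} ≤ (W : Submodule F V) := by
          rw [Submodule.span_le]
          rintro y hy
          rcases hy with rfl | rfl
          · exact p.1.1.2
          · exact p.1.2.2
        have hfr : finrank F (Submodule.span F {(p.1.1 : V), (p.1.2 : V)}) = 2 := by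
          apply aux_span_pair
          · intro h; exact p.2.1 (Subtype.ext h)
          · intro h
            apply p.2.2
            obtain ⟨a, ha⟩ := Submodule.mem_span_singleton.mp h
            have : a • p.1.1 = p.1.2 := Subtype.ext (by simpa using ha)
            exact Submodule.mem_span_singleton.mpr ⟨a, this⟩
        exact Submodule.eq_of_le_of_finrank_eq hle (by rw [hfr, W.2])
      · intro p; apply Subtype.ext; apply Subtype.ext; rfl
      · intro p; apply Subtype.ext; apply Prod.ext <;> (apply Subtype.ext; rfl)
    rw [Nat.card_congr e]
    exact aux_pairs hF ↥(W : Submodule F V) W.2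
  have hPcard : Nat.card P = (q^n - 1) * (q^n - q) := aux_pairs hF V hn
  have hsig : Nat.card P = Nat.card (Σ W : L, {p : P // f p = W}) :=
    (Nat.card_congr (Equiv.sigmaFiberEquiv f)).symm
  letI : Fintype L := Fintype.ofFinite _
  letI : ∀ W : L, Fintype {p : P // f p = W} := fun W => Fintype.ofFinite _
  rw [hsig, Nat.card_eq_fintype_card, Fintype.card_sigma] at hPcard
  have : ∀ W : L, Fintype.card {p : P // f p = W} = (q^2 - 1) * (q^2 - q) := by
    intro W
    rw [← Nat.card_eq_fintype_card, hfib W]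
  rw [Finset.sum_congr rfl (fun W _ => this W), Finset.sum_const, smul_eq_mul,
    Finset.card_univ, ← Nat.card_eq_fintype_card] at hPcard
  exact hPcard

end

set_option maxHeartbeats 1000000 in
theorem subspace_distribution_in_three_dim (q : ℕ) (F K : Type*) [Field F] [Fintype F]
    (hF : Fintype.card F = q) [Field K] [Algebra F K] (h5 : Module.finrank F K = 5)
    (α : Kˣ) (hα : orderOf α = q ^ 5 - 1)
    (Z : Submodule F K) (hZ : Module.finrank F Z = 3) :
    let R : Submodule F K → Submodule F K → Prop :=
      fun X Y => ∃ j : ℕ, Y = X.map (LinearMap.mulLeft F ((α : K) ^ j))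
    ∃ X₀ : Submodule F K, Module.finrank F X₀ = 2 ∧
      Nat.card {W : Submodule F K // W ≤ Z ∧ R X₀ W} = q + 1 ∧
      ∀ X : Submodule F K, Module.finrank F X = 2 → ¬ R X₀ X →
        Nat.card {W : Submodule F K // W ≤ Z ∧ R X W} = 1 := by
  intro R
  classical
  have hq : 2 ≤ q := by rw [← hF]; exact Fintype.one_lt_card
  have hfd : FiniteDimensional F K := Module.finite_of_finrank_pos (by rw [h5]; norm_num)
  have hfinK : Finite K := Finite.of_equiv _ (Module.finBasis F K).equivFun.symm.toEquiv
  have hcardK : Nat.card K = q ^ 5 := by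
    letI : Fintype K := Fintype.ofFinite K
    rw [Nat.card_eq_fintype_card, card_eq_pow_finrank (K := F) (V := K), hF, h5]
  -- α generates Kˣ
  have hgen : ∀ β : Kˣ, ∃ j : ℕ, (α : K) ^ j = (β : K) := by
    intro β
    have htop : Subgroup.zpowers α = ⊤ := by
      apply Subgroup.eq_top_of_card_eq
      rw [Nat.card_zpowers, hα, Nat.card_units, hcardK]
    have hmem : β ∈ Submonoid.powers α := by
      rw [mem_powers_iff_mem_zpowers, htop]; trivial
    obtain ⟨j, hj⟩ := hmem
    exact ⟨j, by rw [← hj]; push_cast; ring⟩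
  have hR : ∀ X Y : Submodule F K, R X Y ↔ ∃ β : Kˣ, Y = X.map (LinearMap.mulLeft F (β : K)) := by
    intro X Y
    constructor
    · rintro ⟨j, rfl⟩
      exact ⟨α ^ j, by push_cast; rfl⟩
    · rintro ⟨β, rfl⟩
      obtain ⟨j, hj⟩ := hgen β
      exact ⟨j, by rw [hj]⟩
  set RU : Submodule F K → Submodule F K → Prop :=
    fun X Y => ∃ β : Kˣ, Y = X.map (LinearMap.mulLeft F (β : K)) with hRUdef
  have hRUrefl : ∀ X, RU X X :=
    fun X => ⟨1, by rw [Units.val_one, LinearMap.mulLeft_one, Submodule.map_id]⟩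
  have hRUsymm : ∀ {X Y}, RU X Y → RU Y X := by
    rintro X Y ⟨β, rfl⟩
    refine ⟨β⁻¹, ?_⟩
    rw [← aux_map_mul, Units.val_inv_eq_inv_val, inv_mul_cancel₀ β.ne_zero,
      LinearMap.mulLeft_one, Submodule.map_id]
  have hRUtrans : ∀ {X Y W}, RU X Y → RU Y W → RU X W := by
    rintro X Y W ⟨β, rfl⟩ ⟨γ, rfl⟩
    exact ⟨γ * β, by rw [Units.val_mul, aux_map_mul]⟩
  have hRUrank : ∀ {X Y}, RU X Y → finrank F Y = finrank F X := by
    rintro X Y ⟨β, rfl⟩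
    exact aux_finrank_map _ β.ne_zero X
  set LK := {X : Submodule F K // finrank F X = 2} with hLK
  set s : Setoid LK := ⟨fun A B => RU A.1 B.1,
    ⟨fun A => hRUrefl A.1, fun h => hRUsymm h, fun h h' => hRUtrans h h'⟩⟩ with hs
  have hfinSub : Finite (Submodule F K) := Finite.of_injective _ SetLike.coe_injective
  have hfinLK : Finite LK := Subtype.finite
  have hfinQ : Finite (Quotient s) :=
    Finite.of_surjective (fun a : LK => (⟦a⟧ : Quotient s)) (fun c => Quotient.exists_rep c)
  letI : Fintype (Quotient s) := Fintype.ofFinite _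
  set LZ := {W : Submodule F K // W ≤ Z ∧ finrank F W = 2} with hLZ
  have hfinLZ : Finite LZ := Subtype.finite
  set g : LZ → Quotient s := fun W => ⟦⟨W.1, W.2.2⟩⟧ with hg
  set gK : LK → Quotient s := fun X => ⟦X⟧ with hgK
  letI : ∀ c : Quotient s, Fintype {W : LZ // g W = c} := fun c => Fintype.ofFinite _
  letI : ∀ c : Quotient s, Fintype {Y : LK // gK Y = c} := fun c => Fintype.ofFinite _
  set fibZ : Quotient s → ℕ := fun c => Nat.card {W : LZ // g W = c} with hfibZdef
  -- fiber identification
  have hfibZ : ∀ X : LK, fibZ ⟦X⟧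
      = Nat.card {W : Submodule F K // W ≤ Z ∧ RU X.1 W} := by
    intro X
    apply Nat.card_congr
    exact {
      toFun := fun W => ⟨W.1.1, W.1.2.1, hRUsymm (Quotient.exact W.2)⟩
      invFun := fun W => ⟨⟨W.1, W.2.1, by rw [hRUrank W.2.2, X.2]⟩,
        Quotient.sound (hRUsymm W.2.2)⟩
      left_inv := fun W => Subtype.ext (Subtype.ext rfl)
      right_inv := fun W => Subtype.ext rfl }
  have hfibK : ∀ X : LK, Nat.card {Y : LK // gK Y = ⟦X⟧}
      = Nat.card {W : Submodule F K // W ≤ (⊤ : Submodule F K) ∧ RU X.1 W} := by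
    intro X
    apply Nat.card_congr
    exact {
      toFun := fun Y => ⟨Y.1.1, le_top, hRUsymm (Quotient.exact Y.2)⟩
      invFun := fun W => ⟨⟨W.1, by rw [hRUrank W.2.2, X.2]⟩,
        Quotient.sound (hRUsymm W.2.2)⟩
      left_inv := fun Y => Subtype.ext (Subtype.ext rfl)
      right_inv := fun W => Subtype.ext rfl }
  -- sum decompositions
  have hsumZ : Nat.card LZ = ∑ c : Quotient s, fibZ c := by
    rw [← Nat.card_congr (Equiv.sigmaFiberEquiv g), Nat.card_eq_fintype_card,
      Fintype.card_sigma]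
    exact Finset.sum_congr rfl (fun c _ => (Nat.card_eq_fintype_card).symm)
  have hsumK : Nat.card LK = ∑ c : Quotient s, Nat.card {Y : LK // gK Y = c} := by
    rw [← Nat.card_congr (Equiv.sigmaFiberEquiv gK), Nat.card_eq_fintype_card,
      Fintype.card_sigma]
    exact Finset.sum_congr rfl (fun c _ => (Nat.card_eq_fintype_card).symm)
  -- orbit sizes
  have horb : ∀ c : Quotient s, (q - 1) * Nat.card {Y : LK // gK Y = c} = q ^ 5 - 1 := by
    intro c
    obtain ⟨X, rfl⟩ := Quotient.exists_rep c
    rw [hfibK X]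
    exact aux_orbit_size hF h5 X.1 X.2
  -- values of fibZ
  have hval : ∀ c : Quotient s, fibZ c = 1 ∨ fibZ c = q + 1 := by
    intro c
    obtain ⟨X, rfl⟩ := Quotient.exists_rep c
    rw [hfibZ X]
    exact aux_count_values hF hq h5 Z hZ X.1 X.2
  -- line counts
  have hLKcard : Nat.card LK * ((q^2 - 1) * (q^2 - q)) = (q^5 - 1) * (q^5 - q) :=
    aux_lines_count hF K h5
  have hLZequiv : Nat.card LZ = Nat.card {W : Submodule F ↥Z // finrank F W = 2} := by
    apply Nat.card_congr
    refine {
      toFun := fun W => ⟨Submodule.comap Z.subtype W.1, ?_⟩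
      invFun := fun W' => ⟨Submodule.map Z.subtype W'.1, Submodule.map_subtype_le Z W'.1, by
        rw [Submodule.finrank_map_subtype_eq]; exact W'.2⟩
      left_inv := ?_
      right_inv := ?_ }
    · have hmc : Submodule.map Z.subtype (Submodule.comap Z.subtype W.1) = W.1 := by
        rw [Submodule.map_comap_subtype, inf_of_le_right W.2.1]
      rw [← Submodule.finrank_map_subtype_eq, hmc]; exact W.2.2
    · intro W
      apply Subtype.ext
      show Submodule.map Z.subtype (Submodule.comap Z.subtype W.1) = W.1
      rw [Submodule.map_comap_subtype, inf_of_le_right W.2.1]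
    · intro W'
      apply Subtype.ext
      show Submodule.comap Z.subtype (Submodule.map Z.subtype W'.1) = W'.1
      exact Submodule.comap_map_eq_of_injective (by exact Subtype.val_injective) W'.1
  have hLZcard : Nat.card LZ * ((q^2 - 1) * (q^2 - q)) = (q^3 - 1) * (q^3 - q) := by
    rw [hLZequiv]
    exact aux_lines_count hF ↥Z hZ
  -- arithmetic facts
  have hb1 : 1 ≤ q := by omega
  have hb2 : q ≤ q^2 := Nat.le_self_pow (by norm_num) q
  have hb3 : 1 ≤ q^2 := Nat.one_le_pow _ _ (by omega)
  have h2q : 2*q ≤ q^2 := by rw [pow_two]; exact Nat.mul_le_mul_right q hq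
  have hb4 : q ≤ q^5 := Nat.le_self_pow (by norm_num) q
  have hb5 : 1 ≤ q^5 := by omega
  have hb6 : 1 ≤ q^3 := Nat.one_le_pow _ _ (by omega)
  have hb7 : q ≤ q^3 := Nat.le_self_pow (by norm_num) q
  have hstuffpos : 0 < (q^2 - 1) * (q^2 - q) := Nat.mul_pos (by omega) (by omega)
  -- B = q^2 + 1
  set B := Fintype.card (Quotient s) with hB
  have hKsum : (q - 1) * Nat.card LK = B * (q^5 - 1) := by
    rw [hsumK, Finset.mul_sum, Finset.sum_congr rfl (fun c _ => horb c),
      Finset.sum_const, smul_eq_mul, Finset.card_univ]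
  have hBeq : B = q^2 + 1 := by
    have h1 : (q - 1) * (Nat.card LK * ((q^2 - 1) * (q^2 - q)))
        = (q - 1) * ((q^5 - 1) * (q^5 - q)) := by rw [hLKcard]
    rw [← mul_assoc, hKsum] at h1
    have h2 : (q^5 - 1) * (B * ((q^2 - 1) * (q^2 - q)))
        = (q^5 - 1) * ((q - 1) * (q^5 - q)) := by
      calc (q^5 - 1) * (B * ((q^2 - 1) * (q^2 - q)))
          = B * (q^5 - 1) * ((q^2 - 1) * (q^2 - q)) := by ring
        _ = (q - 1) * ((q^5 - 1) * (q^5 - q)) := h1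
        _ = (q^5 - 1) * ((q - 1) * (q^5 - q)) := by ring
    have h3 : B * ((q^2 - 1) * (q^2 - q)) = (q - 1) * (q^5 - q) :=
      Nat.eq_of_mul_eq_mul_left (by omega) h2
    have hid : (q - 1) * (q^5 - q) = (q^2 + 1) * ((q^2 - 1) * (q^2 - q)) := by
      zify [hb1, hb2, hb3, hb4]
      ring
    rw [hid] at h3
    exact Nat.eq_of_mul_eq_mul_right hstuffpos h3
  have hLZval : Nat.card LZ = q^2 + q + 1 := by
    have hid : (q^3 - 1) * (q^3 - q) = (q^2 + q + 1) * ((q^2 - 1) * (q^2 - q)) := by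
      zify [hb1, hb2, hb3, hb6, hb7]
      ring
    rw [hid] at hLZcard
    exact Nat.eq_of_mul_eq_mul_right hstuffpos hLZcard
  -- exactly one class with fibZ = q+1
  set A := Finset.univ.filter (fun c : Quotient s => fibZ c = q + 1) with hA
  have hAcard : A.card = 1 := by
    have hsplit := Finset.sum_filter_add_sum_filter_not Finset.univ
      (fun c : Quotient s => fibZ c = q + 1) fibZ
    have hA1 : ∑ c ∈ Finset.univ.filter (fun c : Quotient s => fibZ c = q + 1), fibZ c
        = A.card * (q + 1) := by
      rw [Finset.sum_congr rfl (fun c hc => (Finset.mem_filter.mp hc).2),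
        Finset.sum_const, smul_eq_mul]
    have hA2 : ∑ c ∈ Finset.univ.filter (fun c : Quotient s => ¬ (fibZ c = q + 1)), fibZ c
        = (Finset.univ.filter (fun c : Quotient s => ¬ (fibZ c = q + 1))).card := by
      rw [Finset.sum_congr rfl (fun c hc => by
        rcases hval c with h | h
        · exact h
        · exact absurd h (Finset.mem_filter.mp hc).2), Finset.sum_const, smul_eq_mul, mul_one]
    rw [hA1, hA2] at hsplit
    have hcards : A.card
        + (Finset.univ.filter (fun c : Quotient s => ¬ (fibZ c = q + 1))).card = B := by
      have h := Finset.card_filter_add_card_filter_not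
        (s := (Finset.univ : Finset (Quotient s))) (p := fun c : Quotient s => fibZ c = q + 1)
      rw [Finset.card_univ] at h
      exact h
    rw [← hsumZ, hLZval] at hsplit
    have hexp : A.card * (q + 1) = A.card * q + A.card := by ring
    rw [hexp] at hsplit
    set m := A.card * q with hm
    have hmq : m = q := by omega
    have hfin : A.card * q = 1 * q := by rw [← hm, hmq, one_mul]
    exact Nat.eq_of_mul_eq_mul_right (by omega) hfin
  obtain ⟨c₀, hc₀⟩ := Finset.card_eq_one.mp hAcard
  have hc₀mem : c₀ ∈ A := by rw [hc₀]; exact Finset.mem_singleton_self c₀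
  have hc₀val : fibZ c₀ = q + 1 := (Finset.mem_filter.mp hc₀mem).2
  have huniq : ∀ c : Quotient s, fibZ c = q + 1 → c = c₀ := by
    intro c hcv
    have : c ∈ A := Finset.mem_filter.mpr ⟨Finset.mem_univ c, hcv⟩
    rw [hc₀] at this
    exact Finset.mem_singleton.mp this
  set X₀ : LK := Quotient.out c₀ with hX₀
  have hX₀eq : (⟦X₀⟧ : Quotient s) = c₀ := Quotient.out_eq c₀
  refine ⟨X₀.1, X₀.2, ?_, ?_⟩
  · have he : Nat.card {W : Submodule F K // W ≤ Z ∧ R X₀.1 W}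
        = Nat.card {W : Submodule F K // W ≤ Z ∧ RU X₀.1 W} :=
      Nat.card_congr (Equiv.subtypeEquivRight (fun W =>
        and_congr_right (fun _ => hR X₀.1 W)))
    rw [he, ← hfibZ X₀, hX₀eq, hc₀val]
  · intro X hX2 hnR
    set Xl : LK := ⟨X, hX2⟩ with hXl
    have hne : (⟦Xl⟧ : Quotient s) ≠ c₀ := by
      intro h
      apply hnR
      rw [← hX₀eq] at h
      have hrel : RU X₀.1 Xl.1 := hRUsymm (Quotient.exact h)
      exact (hR X₀.1 X).mpr hrel
    have hv1 : fibZ ⟦Xl⟧ = 1 := by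
      rcases hval ⟦Xl⟧ with h | h
      · exact h
      · exact absurd (huniq _ h) hne
    have he : Nat.card {W : Submodule F K // W ≤ Z ∧ R X W}
        = Nat.card {W : Submodule F K // W ≤ Z ∧ RU X W} :=
      Nat.card_congr (Equiv.subtypeEquivRight (fun W =>
        and_congr_right (fun _ => hR X W)))
    rw [he, ← hfibZ Xl, hv1]
end

section
/- Let q be a prime power, s = (q^3-1)/(q-1) = q^2+q+1, and let D ⊆ Z/sZ be the set of exponents j such that α^j lies in a fixed 2-dimensional subspace Y of F_q^3 (α a primitive element of F_{q^3}). Then |D| = q+1 and the q(q+1) ordered differences d − d' (d ≠ d' ∈ D) are exactly all the q^2+q nonzero residues modulo s, each occurring exactly once. -/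
theorem singer_difference_set (q : ℕ) (F K : Type*) [Field F] [Fintype F]
    (hF : Fintype.card F = q) [Field K] [Algebra F K] (h3 : Module.finrank F K = 3)
    (α : Kˣ) (hα : orderOf α = q ^ 3 - 1)
    (Y : Submodule F K) (hY : Module.finrank F Y = 2) :
    let s : ℕ := q ^ 2 + q + 1
    let D : Set (ZMod s) := {j : ZMod s | (α : K) ^ j.val ∈ Y}
    Nat.card D = q + 1 ∧
      ∀ c : ZMod s, c ≠ 0 →
        Nat.card {p : ZMod s × ZMod s // p.1 ∈ D ∧ p.2 ∈ D ∧ p.1 - p.2 = c} = 1 := by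
  intro s D
  classical
  have hs : s = q ^ 2 + q + 1 := rfl
  have hq2 : 2 ≤ q := by
    have h1 : 1 < Fintype.card F := Fintype.one_lt_card
    omega
  obtain ⟨m, rfl⟩ : ∃ m, q = m + 2 := ⟨q - 2, by omega⟩
  set q := m + 2 with hq
  set n : ℕ := q ^ 3 - 1 with hn
  have hcube : q ^ 3 = s * (q - 1) + 1 := by
    have h1 : q - 1 = m + 1 := by omega
    rw [hs, h1, hq]; ring
  have hn' : n = s * (q - 1) := by omega
  have hq3 : 8 ≤ q ^ 3 := by
    calc (8:ℕ) = 2 ^ 3 := rfl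
    _ ≤ q ^ 3 := Nat.pow_le_pow_left (by omega) 3
  have hspos : 0 < s := by omega
  have hnpos : 0 < n := by omega
  haveI : NeZero s := ⟨by omega⟩
  haveI : NeZero n := ⟨by omega⟩
  haveI : FiniteDimensional F K := FiniteDimensional.of_finrank_eq_succ h3
  haveI : Finite K := Module.finite_of_finite F
  haveI : Fintype K := Fintype.ofFinite K
  have hcardK : Fintype.card K = q ^ 3 := by
    rw [Module.card_eq_pow_finrank (K := F) (V := K), hF, h3]
  have horder : orderOf α = n := hα
  have hgen : ∀ x : Kˣ, ∃ k : ℕ, α ^ k = x := by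
    intro x
    have htop : Subgroup.zpowers α = ⊤ := by
      rw [← Subgroup.card_eq_iff_eq_top, Nat.card_zpowers, horder, Nat.card_eq_fintype_card,
        Fintype.card_units, hcardK]
    have hx : x ∈ Subgroup.zpowers α := htop ▸ Subgroup.mem_top x
    obtain ⟨k, hk⟩ := mem_powers_iff_mem_zpowers.mpr hx
    exact ⟨k, hk⟩
  have hpowinj : ∀ a b : ℕ, a < n → b < n → (α:K) ^ a = (α:K) ^ b → a = b := by
    intro a b ha hb h
    have h1 : α ^ a = α ^ b := Units.ext (by simpa using h)
    have h2 : a ≡ b [MOD orderOf α] := pow_eq_pow_iff_modEq.mp h1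
    rw [horder] at h2
    exact h2.eq_of_lt_of_lt ha hb
  -- α ^ s is a nonzero scalar
  have hscal : ∃ u : F, u ≠ 0 ∧ algebraMap F K u = (α:K) ^ s := by
    set T : Finset K := (Finset.univ.erase (0:F)).image (algebraMap F K) with hT
    have hTcard : T.card = q - 1 := by
      rw [hT, Finset.card_image_of_injective _ (algebraMap F K).injective,
        Finset.card_erase_of_mem (Finset.mem_univ _), Finset.card_univ, hF]
    set P : Polynomial K := Polynomial.X ^ (q-1) - Polynomial.C 1 with hP
    have hPdeg : P.degree = ((q-1 : ℕ) : WithBot ℕ) := by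
      rw [hP]
      exact Polynomial.degree_X_pow_sub_C (by omega) 1
    have hPne : P ≠ 0 := Polynomial.X_pow_sub_C_ne_zero (by omega) 1
    have hroot : ∀ x : K, x ^ (q-1) = 1 → x ∈ P.roots.toFinset := by
      intro x hx
      rw [Multiset.mem_toFinset, Polynomial.mem_roots hPne]
      have hx' : x ^ (m + 1) = 1 := by
        rwa [show q - 1 = m + 1 by omega] at hx
      simp [hP, Polynomial.IsRoot, sub_eq_zero, hx, hx']
    have hsub : T ⊆ P.roots.toFinset := by
      intro x hx
      rw [hT, Finset.mem_image] at hx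
      obtain ⟨u, hu, rfl⟩ := hx
      rw [Finset.mem_erase] at hu
      apply hroot
      have hu1 : u ^ (q - 1) = 1 := by
        rw [← hF]; exact FiniteField.pow_card_sub_one_eq_one u hu.1
      rw [← map_pow, hu1, map_one]
    have hle : P.roots.toFinset.card ≤ q - 1 := by
      calc P.roots.toFinset.card ≤ Multiset.card P.roots := P.roots.toFinset_card_le
      _ ≤ P.natDegree := P.card_roots' 
      _ = q - 1 := Polynomial.natDegree_eq_of_degree_eq_some hPdeg
    have hTeq : T = P.roots.toFinset := Finset.eq_of_subset_of_card_le hsub (by omega)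
    have hmem : (α:K) ^ s ∈ T := by
      rw [hTeq]
      apply hroot
      rw [← pow_mul, ← hn']
      have : α ^ n = 1 := by rw [← horder]; exact pow_orderOf_eq_one α
      calc (α:K) ^ n = ((α ^ n : Kˣ) : K) := by rw [Units.val_pow_eq_pow_val]
      _ = 1 := by rw [this]; rfl
    rw [hT, Finset.mem_image] at hmem
    obtain ⟨u, hu, huα⟩ := hmem
    rw [Finset.mem_erase] at hu
    exact ⟨u, hu.1, huα⟩
  obtain ⟨u, hu0, huα⟩ := hscal
  -- the key periodicity lemma
  have hL2 : ∀ a b : ℕ, a % s = b % s → ((α:K) ^ a ∈ Y ↔ (α:K) ^ b ∈ Y) := by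
    have hstep : ∀ a : ℕ, ((α:K) ^ (a + s) ∈ Y ↔ (α:K) ^ a ∈ Y) := by
      intro a
      have : (α:K) ^ (a + s) = u • (α:K) ^ a := by
        rw [pow_add, Algebra.smul_def, huα]; ring
      rw [this]
      exact Y.smul_mem_iff hu0
    have hmul : ∀ t a : ℕ, ((α:K) ^ (a + s * t) ∈ Y ↔ (α:K) ^ a ∈ Y) := by
      intro t
      induction t with
      | zero => simp
      | succ t ih =>
        intro a
        rw [show a + s * (t+1) = (a + s * t) + s by ring, hstep, ih]
    intro a b hab
    rw [← Nat.mod_add_div a s, ← Nat.mod_add_div b s, hmul, hmul, hab]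
  -- Finset versions of D
  set Dfin : Finset (ZMod s) := Finset.univ.filter (fun j => (α:K) ^ j.val ∈ Y) with hDfin
  set B : Finset ℕ := (Finset.range s).filter (fun k => (α:K) ^ k ∈ Y) with hB
  set A : Finset ℕ := (Finset.range n).filter (fun k => (α:K) ^ k ∈ Y) with hA
  have hDB : Dfin.card = B.card := by
    refine Finset.card_bij' (fun (j : ZMod s) _ => j.val) (fun (k : ℕ) _ => ((k : ZMod s)))
      ?_ ?_ ?_ ?_
    · intro j hj
      rw [hDfin, Finset.mem_filter] at hj
      rw [hB, Finset.mem_filter, Finset.mem_range]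
      exact ⟨ZMod.val_lt j, hj.2⟩
    · intro k hk
      rw [hB, Finset.mem_filter, Finset.mem_range] at hk
      rw [hDfin, Finset.mem_filter]
      refine ⟨Finset.mem_univ _, ?_⟩
      rw [ZMod.val_natCast_of_lt hk.1]
      exact hk.2
    · intro j _
      simp [ZMod.natCast_val, ZMod.cast_id]
    · intro k hk
      rw [hB, Finset.mem_filter, Finset.mem_range] at hk
      exact ZMod.val_natCast_of_lt hk.1
  -- Y as a finset
  set Ynz : Finset K := Finset.univ.filter (fun y => y ∈ Y ∧ y ≠ 0) with hYnz
  have hYfil : (Finset.univ.filter (fun y : K => y ∈ Y)).card = q ^ 2 := by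
    rw [← Fintype.card_subtype, ← Nat.card_eq_fintype_card, Nat.card_eq_fintype_card,
      Module.card_eq_pow_finrank (K := F) (V := Y), hF, hY]
  have hYnzcard : Ynz.card = q ^ 2 - 1 := by
    have h1 : Ynz = (Finset.univ.filter (fun y : K => y ∈ Y)).erase 0 := by
      ext y
      rw [hYnz, Finset.mem_erase, Finset.mem_filter, Finset.mem_filter]
      tauto
    rw [h1, Finset.card_erase_of_mem, hYfil]
    rw [Finset.mem_filter]
    exact ⟨Finset.mem_univ _, Y.zero_mem⟩
  have hAcard : A.card = q ^ 2 - 1 := by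
    rw [← hYnzcard]
    apply Finset.card_bij (fun k _ => (α:K) ^ k)
    · intro k hk
      rw [hA, Finset.mem_filter] at hk
      rw [hYnz, Finset.mem_filter]
      exact ⟨Finset.mem_univ _, hk.2, pow_ne_zero _ (Units.ne_zero α)⟩
    · intro a ha b hb h
      rw [hA, Finset.mem_filter, Finset.mem_range] at ha hb
      exact hpowinj a b ha.1 hb.1 h
    · intro y hy
      rw [hYnz, Finset.mem_filter] at hy
      obtain ⟨k, hk⟩ := hgen (Units.mk0 y hy.2.2)
      have hk' : (α:K) ^ (k % n) = y := by
        have h1 : α ^ (k % n) = α ^ k := by rw [← horder]; exact pow_mod_orderOf α k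
        calc (α:K) ^ (k % n) = ((α ^ (k % n) : Kˣ) : K) := by rw [Units.val_pow_eq_pow_val]
        _ = ((α ^ k : Kˣ) : K) := by rw [h1]
        _ = y := by rw [hk]; rfl
      refine ⟨k % n, ?_, hk'⟩
      rw [hA, Finset.mem_filter, Finset.mem_range]
      exact ⟨Nat.mod_lt _ hnpos, hk' ▸ hy.2.1⟩
  have hAB : A.card = B.card * (q - 1) := by
    rw [show q - 1 = (Finset.range (q-1)).card from (Finset.card_range _).symm,
      ← Finset.card_product]
    refine (Finset.card_bij (fun (p : ℕ × ℕ) _ => p.1 + s * p.2) ?_ ?_ ?_).symm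
    · intro p hp
      rw [Finset.mem_product, hB, Finset.mem_filter, Finset.mem_range, Finset.mem_range] at hp
      rw [hA, Finset.mem_filter, Finset.mem_range]
      beta_reduce
      obtain ⟨⟨h1, h2⟩, h3⟩ := hp
      constructor
      · have h4 : s * p.2 + s ≤ s * (q - 1) := by
          have h5 := Nat.mul_le_mul_left s (show p.2 + 1 ≤ q - 1 by omega)
          rwa [Nat.mul_add, Nat.mul_one] at h5
        omega
      · rw [hL2 (p.1 + s * p.2) p.1 (by rw [Nat.add_mul_mod_self_left])]
        exact h2
    · intro a ha b hb h
      beta_reduce at h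
      rw [Finset.mem_product, hB, Finset.mem_filter, Finset.mem_range] at ha hb
      have h1 : a.1 = b.1 := by
        have h2 := congrArg (· % s) h
        simpa [Nat.add_mul_mod_self_left, Nat.mod_eq_of_lt ha.1.1,
          Nat.mod_eq_of_lt hb.1.1] using h2
      have h3 : a.2 = b.2 := by
        apply Nat.eq_of_mul_eq_mul_left hspos
        omega
      exact Prod.ext h1 h3
    · intro k hk
      rw [hA, Finset.mem_filter, Finset.mem_range] at hk
      refine ⟨(k % s, k / s), ?_, Nat.mod_add_div k s⟩
      rw [Finset.mem_product, hB, Finset.mem_filter, Finset.mem_range, Finset.mem_range]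
      refine ⟨⟨Nat.mod_lt _ hspos, ?_⟩, ?_⟩
      · rw [hL2 (k % s) k (Nat.mod_mod_of_dvd k (dvd_refl s))]
        exact hk.2
      · rw [Nat.div_lt_iff_lt_mul hspos]
        have hcomm : s * (q - 1) = (q - 1) * s := Nat.mul_comm _ _
        omega
  have hBcard : B.card = q + 1 := by
    have h1 : q ^ 2 - 1 = (q + 1) * (q - 1) := by
      have h2 : q ^ 2 = (q + 1) * (q - 1) + 1 := by
        rw [show q - 1 = m + 1 by omega, hq]; ring
      omega
    have h2 : B.card * (q - 1) = (q + 1) * (q - 1) := by rw [← hAB, hAcard, h1]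
    exact Nat.eq_of_mul_eq_mul_right (by omega) h2
  -- D as a set equals Dfin
  have hDset : D = ↑Dfin := by
    ext j
    rw [hDfin, Finset.coe_filter]
    simp only [Finset.mem_univ, true_and]
    exact Iff.rfl
  have hDcard : Nat.card D = q + 1 := by
    rw [Nat.card_coe_set_eq, hDset, Set.ncard_coe_finset, hDB, hBcard]
  refine ⟨hDcard, ?_⟩
  -- the difference part
  set Pfin : ZMod s → Finset (ZMod s × ZMod s) :=
    fun c => Finset.univ.filter (fun p => p.1 ∈ D ∧ p.2 ∈ D ∧ p.1 - p.2 = c) with hPfin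
  have hNat : ∀ c : ZMod s,
      Nat.card {p : ZMod s × ZMod s // p.1 ∈ D ∧ p.2 ∈ D ∧ p.1 - p.2 = c} = (Pfin c).card := by
    intro c
    rw [Nat.card_eq_fintype_card, Fintype.card_subtype]
  -- member of D iff member of Dfin
  have hmemD : ∀ j : ZMod s, j ∈ D ↔ j ∈ Dfin := by
    intro j
    rw [hDset, Finset.mem_coe]
  -- the set of all off-diagonal pairs
  set Q : Finset (ZMod s × ZMod s) := (Dfin ×ˢ Dfin).filter (fun p => p.1 ≠ p.2) with hQ
  have h6 : Dfin.card = q + 1 := by rw [hDB, hBcard]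
  have hQcard : Q.card = q ^ 2 + q := by
    have h1 := Finset.card_filter_add_card_filter_not
      (s := Dfin ×ˢ Dfin) (p := fun p => p.1 = p.2)
    have h2 : ((Dfin ×ˢ Dfin).filter (fun p => p.1 = p.2)).card = Dfin.card := by
      refine Finset.card_bij' (fun (p : ZMod s × ZMod s) _ => p.1) (fun (d : ZMod s) _ => (d, d))
        ?_ ?_ ?_ ?_
      · intro p hp
        rw [Finset.mem_filter, Finset.mem_product] at hp
        exact hp.1.1
      · intro d hd
        rw [Finset.mem_filter, Finset.mem_product]
        exact ⟨⟨hd, hd⟩, rfl⟩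
      · intro p hp
        rw [Finset.mem_filter] at hp
        beta_reduce
        exact Prod.ext rfl hp.2
      · intro d _
        rfl
    have h5 : (Dfin ×ˢ Dfin).filter (fun a => ¬ (fun p : ZMod s × ZMod s => p.1 = p.2) a) = Q := by
      rw [hQ]
    rw [h5, h2, Finset.card_product, h6] at h1
    have h7 : (q+1) * (q+1) = q^2 + q + (q + 1) := by rw [hq]; ring
    omega
  -- fiberwise count
  have hmemQ : ∀ p ∈ Q, (fun p : ZMod s × ZMod s => p.1 - p.2) p ∈
      Finset.univ.erase (0 : ZMod s) := by
    intro p hp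
    rw [hQ, Finset.mem_filter] at hp
    rw [Finset.mem_erase]
    exact ⟨sub_ne_zero_of_ne hp.2, Finset.mem_univ _⟩
  have hfiber := Finset.card_eq_sum_card_fiberwise hmemQ
  have hfib2 : ∀ c ∈ Finset.univ.erase (0 : ZMod s),
      Q.filter (fun p => p.1 - p.2 = c) = Pfin c := by
    intro c hc
    rw [Finset.mem_erase] at hc
    ext p
    simp only [hPfin, hQ, Finset.mem_filter, Finset.mem_product, Finset.mem_univ, true_and]
    constructor
    · rintro ⟨⟨⟨hp1, hp2⟩, -⟩, hpc⟩
      exact ⟨(hmemD _).mpr hp1, (hmemD _).mpr hp2, hpc⟩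
    · rintro ⟨hp1, hp2, hpc⟩
      refine ⟨⟨⟨(hmemD _).mp hp1, (hmemD _).mp hp2⟩, ?_⟩, hpc⟩
      intro he
      rw [he, sub_self] at hpc
      exact hc.1 hpc.symm
  have hsum : ∑ c ∈ Finset.univ.erase (0 : ZMod s), (Pfin c).card = q ^ 2 + q := by
    rw [← hQcard, hfiber]
    exact Finset.sum_congr rfl (fun c hc => by rw [hfib2 c hc])
  -- existence of at least one pair for every nonzero difference
  have hpos : ∀ c' : ZMod s, c' ≠ 0 → 1 ≤ (Pfin c').card := by
    intro c' hc'
    apply Finset.card_pos.mpr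
    set g : K := (α:K) ^ (c'.val) with hgdef
    have hg0 : g ≠ 0 := pow_ne_zero _ (Units.ne_zero α)
    set Y' : Submodule F K := Y.map (LinearMap.mulLeft F g) with hY'def
    have hY'rank : Module.finrank F Y' = 2 := by
      rw [← hY]
      exact (Submodule.equivMapOfInjective _ (by intro x y h; exact mul_left_cancel₀ hg0 h)
        Y).finrank_eq.symm
    have hsup : Module.finrank F (Y ⊔ Y' : Submodule F K) ≤ 3 := by
      rw [← h3]; exact Submodule.finrank_le _
    have hinf : (Y ⊓ Y' : Submodule F K) ≠ ⊥ := by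
      intro hbot
      have h1 := Submodule.finrank_sup_add_finrank_inf_eq Y Y'
      rw [hY, hY'rank, hbot, finrank_bot] at h1
      omega
    obtain ⟨z, hzmem, hz0⟩ := (Submodule.ne_bot_iff _).mp hinf
    rw [Submodule.mem_inf] at hzmem
    obtain ⟨hzY, hzY'⟩ := hzmem
    rw [hY'def, Submodule.mem_map] at hzY'
    obtain ⟨y, hyY, hyz⟩ := hzY'
    rw [LinearMap.mulLeft_apply] at hyz
    have hy0 : y ≠ 0 := by
      rintro rfl
      rw [mul_zero] at hyz
      exact hz0 hyz.symm
    obtain ⟨k, hk⟩ := hgen (Units.mk0 y hy0)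
    have hyk : (α:K) ^ k = y := by
      calc (α:K)^k = ((α^k : Kˣ):K) := (Units.val_pow_eq_pow_val α k).symm
      _ = y := by rw [hk]; rfl
    have hzk : (α:K) ^ (c'.val + k) = z := by
      rw [pow_add, hyk, ← hgdef, hyz]
    have hd2 : ((k : ZMod s)) ∈ D := by
      show (α:K) ^ ((k : ZMod s)).val ∈ Y
      rw [hL2 _ k (by rw [ZMod.val_natCast]; exact Nat.mod_mod_of_dvd k (dvd_refl s))]
      rw [hyk]; exact hyY
    have hd1 : ((c'.val + k : ℕ) : ZMod s) ∈ D := by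
      show (α:K) ^ (((c'.val + k : ℕ) : ZMod s)).val ∈ Y
      rw [hL2 _ (c'.val + k) (by rw [ZMod.val_natCast]; exact Nat.mod_mod_of_dvd _ (dvd_refl s))]
      rw [hzk]; exact hzY
    refine ⟨(((c'.val + k : ℕ) : ZMod s), (k : ZMod s)), ?_⟩
    simp only [hPfin, Finset.mem_filter, Finset.mem_univ, true_and]
    refine ⟨hd1, hd2, ?_⟩
    push_cast
    rw [ZMod.natCast_val, ZMod.cast_id]
    ring
  -- conclude
  intro c hc
  rw [hNat c]
  have hcards : (Finset.univ.erase (0 : ZMod s)).card = q ^ 2 + q := by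
    rw [Finset.card_erase_of_mem (Finset.mem_univ _), Finset.card_univ, ZMod.card, hs]
    omega
  by_contra hne
  have h2 : 2 ≤ (Pfin c).card := by
    have := hpos c hc
    omega
  have hlt := Finset.sum_lt_sum (s := Finset.univ.erase (0 : ZMod s))
    (f := fun _ => (1:ℕ)) (g := fun c' => (Pfin c').card)
    (fun j hj => hpos j (Finset.mem_erase.mp hj).1)
    ⟨c, Finset.mem_erase.mpr ⟨hc, Finset.mem_univ _⟩, h2⟩
  rw [Finset.sum_const, smul_eq_mul, mul_one, hcards, hsum] at hlt
  omega
end
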